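/- arXiv:1911.00937 — 10 statements merged into one kernel-verified Lean document; each statement's English description precedes it below -/
import Mathlib

section
/- If r and r' are rank tuples with Σ_i r_i ≠ Σ_i r'_i, then 𝒞(r) and 𝒞(r') are disjoint: 𝒞(r) ∩ 𝒞(r') = ∅. -/
/-
For `A = 𝒜(P, H)`, the products in the `A_j` expand `∏ᵢ (Pᵢ + (I - Pᵢ)) = I`, so `∑ⱼ A_j = H`, and
counting each term with its weight `j` gives `∑ⱼ j A_j = H ∑ᵢ (I - Pᵢ)`. As `HᵀH = I` and the trace
of a projector is its rank, `tr ((∑ⱼ A_j)ᵀ ∑ⱼ j A_j) = (K - 1) n - ∑ᵢ rᵢ`: the kernel determines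
the total rank.
-/

open Matrix

def IsSymProj (n : ℕ) (P : Matrix (Fin n) (Fin n) ℝ) : Prop :=
  P * P = P ∧ Pᵀ = P

noncomputable def Aker (n K : ℕ) (P : Fin (K-1) → Matrix (Fin n) (Fin n) ℝ)
    (H : Matrix (Fin n) (Fin n) ℝ) : Fin K → Matrix (Fin n) (Fin n) ℝ :=
  fun j => ∑ δ ∈ Finset.univ.filter
      (fun δ : Fin (K-1) → Bool => (∑ i, (if δ i then 1 else 0)) = (j : ℕ)),
    H * ((List.finRange (K-1)).map
      (fun i => if δ i then (1 : Matrix (Fin n) (Fin n) ℝ) - P i else P i)).prod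

def SOCK (n K : ℕ) (r : Fin (K-1) → ℕ) : Set (Fin K → Matrix (Fin n) (Fin n) ℝ) :=
  {A | ∃ P H, (∀ i, IsSymProj n (P i) ∧ (P i).rank = r i) ∧
    Hᵀ * H = 1 ∧ H.det = 1 ∧ A = Aker n K P H}

theorem Matrix.trace_eq_rank_of_isIdempotentElem {ι K : Type*} [Fintype ι] [DecidableEq ι]
    [Field K] {P : Matrix ι ι K} (hP : IsIdempotentElem P) : P.trace = P.rank := by
  have hproj : LinearMap.IsProj (LinearMap.range P.toLin') P.toLin' :=
    LinearMap.IsIdempotentElem.isProj_range _ (hP.map Matrix.toLinAlgEquiv')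
  rw [← trace_toLin'_eq, hproj.trace]
  rfl

namespace List

variable {R : Type*} [Semiring R]

theorem sum_prod_ofFn {β : Type*} [Fintype β] :
    ∀ {m : ℕ} (f : Fin m → β → R),
      ∑ δ : Fin m → β, (ofFn fun i => f i (δ i)).prod = (ofFn fun i => ∑ b, f i b).prod
  | 0, f => by simp
  | m + 1, f => by
    rw [← (Fin.consEquiv fun _ => β).sum_comp, Fintype.sum_prod_type, ofFn_succ, prod_cons,
      ← sum_prod_ofFn, Finset.sum_mul_sum]
    simp [Fin.consEquiv, ofFn_succ]

theorem prod_ofFn_ite_eq {M : Type*} [Monoid M] :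
    ∀ {m : ℕ} (i : Fin m) (a : M), (ofFn fun j => if j = i then a else 1).prod = a
  | m + 1, i, a => by
    rw [ofFn_succ, prod_cons]
    cases i using Fin.cases with
    | zero => simp [prod_eq_one, Fin.succ_ne_zero]
    | succ i => simp [(Fin.succ_ne_zero i).symm, prod_ofFn_ite_eq i a]

/-- Swapping the sums, the terms with `δ i = true` add up to `f i true`: they are the expansion of
`∏ j, ∑ b, f j b` with `f i false` replaced by `0`. -/
theorem sum_card_smul_prod_ofFn {m : ℕ} (f : Fin m → Bool → R)
    (hf : ∀ i, ∑ b, f i b = 1) :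
    ∑ δ : Fin m → Bool, (∑ i, if δ i then 1 else 0 : ℕ) • (ofFn fun i => f i (δ i)).prod =
      ∑ i, f i true := by
  simp_rw [Finset.sum_smul]
  rw [Finset.sum_comm]
  refine Finset.sum_congr rfl fun i _ => ?_
  set g : Fin m → Bool → R := fun j b => if j = i then (if b then f i true else 0) else f j b
  have hterm (δ : Fin m → Bool) :
      (if δ i then 1 else 0 : ℕ) • (ofFn fun j => f j (δ j)).prod =
        (ofFn fun j => g j (δ j)).prod := by
    cases hδ : δ i
    · refine (zero_smul ℕ _).trans (prod_eq_zero (mem_ofFn.2 ⟨i, ?_⟩)).symm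
      simp [g, hδ]
    · rw [if_pos rfl, one_smul]
      congr 1
      refine ofFn_inj.2 (funext fun j => ?_)
      by_cases hj : j = i <;> simp [g, hj, hδ]
  have hsum (j : Fin m) : ∑ b, g j b = if j = i then f i true else 1 := by
    by_cases hj : j = i <;> simp [g, hj, ← hf j, add_comm]
  simp_rw [hterm, sum_prod_ofFn g, hsum, prod_ofFn_ite_eq]

end List

theorem Fin.sum_fiberwise_val {α M : Type*} [Fintype α] [AddCommMonoid M] {K : ℕ}
    (w : α → ℕ) (hw : ∀ a, w a < K) (g : α → M) :
    ∑ j : Fin K, ∑ a ∈ Finset.univ.filter (fun a => w a = j), g a = ∑ a, g a := by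
  simpa [Fin.ext_iff] using Finset.sum_fiberwise Finset.univ (fun a => (⟨w a, hw a⟩ : Fin K)) g

theorem Fin.sum_boole_lt {K : ℕ} (hK : 0 < K) (δ : Fin (K-1) → Bool) :
    (∑ i, if δ i then 1 else 0) < K := by
  have := Finset.card_filter_le (Finset.univ : Finset (Fin (K-1))) (fun i => δ i)
  simp only [Finset.sum_boole, Nat.cast_id, Finset.card_univ, Fintype.card_fin] at this ⊢
  omega

section Kernel

variable {n K : ℕ} (P : Fin (K-1) → Matrix (Fin n) (Fin n) ℝ) (H : Matrix (Fin n) (Fin n) ℝ)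

def kernelFactor (i : Fin (K-1)) (b : Bool) : Matrix (Fin n) (Fin n) ℝ :=
  if b then 1 - P i else P i

theorem sum_kernelFactor (i : Fin (K-1)) : ∑ b, kernelFactor P i b = 1 := by
  simp [kernelFactor]

theorem Aker_eq (j : Fin K) : Aker n K P H j =
    ∑ δ ∈ Finset.univ.filter (fun δ : Fin (K-1) → Bool => (∑ i, if δ i then 1 else 0) = (j : ℕ)),
      H * (List.ofFn fun i => kernelFactor P i (δ i)).prod := by
  simp only [Aker, kernelFactor, List.ofFn_eq_map]

theorem sum_Aker (hK : 0 < K) : ∑ j, Aker n K P H j = H := by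
  simp_rw [Aker_eq, Fin.sum_fiberwise_val _ (Fin.sum_boole_lt hK), ← Finset.mul_sum,
    List.sum_prod_ofFn, sum_kernelFactor]
  simp

theorem sum_smul_Aker (hK : 0 < K) :
    ∑ j : Fin K, (j : ℕ) • Aker n K P H j = H * ∑ i, (1 - P i) := by
  have hweight (j : Fin K) : (j : ℕ) • Aker n K P H j =
      ∑ δ ∈ Finset.univ.filter (fun δ : Fin (K-1) → Bool => (∑ i, if δ i then 1 else 0) = (j : ℕ)),
        (∑ i, if δ i then 1 else 0 : ℕ) •
          (H * (List.ofFn fun i => kernelFactor P i (δ i)).prod) := by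
    rw [Aker_eq, Finset.smul_sum]
    exact Finset.sum_congr rfl fun δ hδ => by rw [(Finset.mem_filter.1 hδ).2]
  simp_rw [hweight, Fin.sum_fiberwise_val _ (Fin.sum_boole_lt hK), ← mul_smul_comm,
    ← Finset.mul_sum, List.sum_card_smul_prod_ofFn _ (sum_kernelFactor P)]
  rfl

end Kernel

def kernelInvariant {n K : ℕ} (A : Fin K → Matrix (Fin n) (Fin n) ℝ) : ℝ :=
  trace ((∑ j, A j)ᵀ * ∑ j : Fin K, (j : ℕ) • A j)

theorem kernelInvariant_Aker {n K : ℕ} (hK : 0 < K) {P : Fin (K-1) → Matrix (Fin n) (Fin n) ℝ}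
    {H : Matrix (Fin n) (Fin n) ℝ} (hP : ∀ i, IsIdempotentElem (P i)) (hH : Hᵀ * H = 1) :
    kernelInvariant (Aker n K P H) = ((K - 1 : ℕ) * n : ℝ) - ∑ i, ((P i).rank : ℝ) := by
  rw [kernelInvariant, sum_Aker P H hK, sum_smul_Aker P H hK, ← mul_assoc, hH, one_mul, trace_sum]
  simp [trace_sub, trace_eq_rank_of_isIdempotentElem (hP _), Finset.sum_sub_distrib]

theorem kernelInvariant_of_mem_SOCK {n K : ℕ} (hK : 0 < K) {r : Fin (K-1) → ℕ}
    {A : Fin K → Matrix (Fin n) (Fin n) ℝ} (hA : A ∈ SOCK n K r) :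
    kernelInvariant A = ((K - 1 : ℕ) * n : ℝ) - ∑ i, (r i : ℝ) := by
  obtain ⟨P, H, hP, hH, -, rfl⟩ := hA
  simp only [kernelInvariant_Aker hK (fun i => (hP i).1.1) hH, (hP _).2]

theorem stmt2_general (n K : ℕ) (hK : 2 ≤ K)
    (r r' : Fin (K-1) → ℕ) (hsum : ∑ i, r i ≠ ∑ i, r' i) :
    SOCK n K r ∩ SOCK n K r' = ∅ := by
  refine Set.eq_empty_of_forall_notMem fun A ⟨hA, hA'⟩ => hsum ?_
  have h := (kernelInvariant_of_mem_SOCK (by omega) hA).symm.trans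
    (kernelInvariant_of_mem_SOCK (by omega) hA')
  exact_mod_cast sub_right_injective h

theorem stmt2 (n K : ℕ) (hn : 1 ≤ n) (hK : 2 ≤ K)
    (r r' : Fin (K-1) → ℕ) (hr : ∀ i, r i ≤ n) (hr' : ∀ i, r' i ≤ n)
    (hsum : ∑ i, r i ≠ ∑ i, r' i) :
    SOCK n K r ∩ SOCK n K r' = ∅ :=
  stmt2_general n K hK r r' hsum
end

section
/- 𝒞 equals the union of the canonical SOCK submanifolds: 𝒞 = 𝒞_0 ∪ 𝒞_1 ∪ ⋯ ∪ 𝒞_{(K−1)n}. -/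
open Matrix

/-- The canonical (balanced, non-decreasing) rank tuple with `m` entries summing to `k`. -/
def canonRank (m k : ℕ) : Fin m → ℕ :=
  fun i => k / m + (if m ≤ (i : ℕ) + k % m then 1 else 0)

def SOCKall (n K : ℕ) : Set (Fin K → Matrix (Fin n) (Fin n) ℝ) :=
  ⋃ r ∈ {r : Fin (K-1) → ℕ | ∀ i, r i ≤ n}, SOCK n K r

/-!
The kernel is the coefficient list of the matrix polynomial `H * ∏ᵢ (Pᵢ + X (1 - Pᵢ))`, and the
product of two consecutive factors only depends on `Pᵢ Pᵢ₊₁` and `Pᵢ + Pᵢ₊₁`. If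
`rank Pⱼ < rank Pᵢ` for adjacent `i, j`, a unit vector `w ∈ range Pᵢ ∩ ker Pⱼ` gives a rank-one
projector `R = w wᵀ` such that `Pᵢ - R` and `Pⱼ + R` are symmetric projectors with the same
products (in both orders) and the same sum. So moving one unit of rank from a larger entry of `r`
to an adjacent smaller one can only enlarge `𝒞(r)`. Such moves turn every rank tuple into the
balanced non-decreasing one with the same sum: balance the tail by induction on the length, then
trade units between the head and the balanced tail until the head is `⌊k / m⌋`.
-/

open Polynomial

namespace Matrix

variable {K ι : Type*} [Field K] [Fintype ι]

theorem rank_eq_trace_of_isIdempotentElem [DecidableEq ι] {M : Matrix ι ι K}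
    (h : IsIdempotentElem M) : (M.rank : K) = M.trace := by
  have hM : IsIdempotentElem M.mulVecLin := by
    rw [IsIdempotentElem, Module.End.mul_eq_comp, ← mulVecLin_mul, h.eq]
  rw [← trace_toLin'_eq, toLin'_apply', (LinearMap.IsIdempotentElem.isProj_range _ hM).trace,
    rank]

theorem exists_ne_zero_mulVec_eq_self_mulVec_eq_zero {P Q : Matrix ι ι K}
    (hP : IsIdempotentElem P) (h : Q.rank < P.rank) :
    ∃ w ≠ 0, P *ᵥ w = w ∧ Q *ᵥ w = 0 := by
  obtain ⟨⟨w, v, rfl⟩, hQ, hw⟩ := Submodule.exists_mem_ne_zero_of_ne_bot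
    (LinearMap.ker_ne_bot_of_finrank_lt
      (f := Q.mulVecLin.rangeRestrict ∘ₗ (LinearMap.range P.mulVecLin).subtype) h)
  refine ⟨P *ᵥ v, fun h0 => hw (Subtype.ext h0), ?_, ?_⟩
  · rw [mulVec_mulVec, hP.eq]
  · simpa [Subtype.ext_iff] using hQ

end Matrix

namespace IsSymProj

variable {n : ℕ} {P Q : Matrix (Fin n) (Fin n) ℝ}

theorem exists_rankOne_le_orthogonal (hP : IsSymProj n P) (hQ : IsSymProj n Q)
    (h : Q.rank < P.rank) :
    ∃ R, IsSymProj n R ∧ R.trace = 1 ∧ P * R = R ∧ R * P = R ∧ Q * R = 0 ∧ R * Q = 0 := by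
  obtain ⟨w, hw, hPw, hQw⟩ := exists_ne_zero_mulVec_eq_self_mulVec_eq_zero hP.1 h
  have hww : w ⬝ᵥ w ≠ 0 := fun h0 => hw (dotProduct_self_eq_zero.mp h0)
  have hwP : w ᵥ* P = w := by rw [← mulVec_transpose, hP.2, hPw]
  have hwQ : w ᵥ* Q = 0 := by rw [← mulVec_transpose, hQ.2, hQw]
  refine ⟨(w ⬝ᵥ w)⁻¹ • vecMulVec w w, ⟨?_, ?_⟩, ?_, ?_, ?_, ?_, ?_⟩
  · rw [Matrix.smul_mul, Matrix.mul_smul, vecMulVec_mul_vecMulVec, vecMulVec_smul, smul_smul,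
      smul_smul, inv_mul_cancel_right₀ hww]
  · rw [transpose_smul, transpose_vecMulVec]
  · rw [trace_smul, trace_vecMulVec, smul_eq_mul, inv_mul_cancel₀ hww]
  · rw [Matrix.mul_smul, mul_vecMulVec, hPw]
  · rw [Matrix.smul_mul, vecMulVec_mul, hwP]
  · rw [Matrix.mul_smul, mul_vecMulVec, hQw, zero_vecMulVec, smul_zero]
  · rw [Matrix.smul_mul, vecMulVec_mul, hwQ, vecMulVec_zero, smul_zero]

theorem exists_rank_transfer (hP : IsSymProj n P) (hQ : IsSymProj n Q) (h : Q.rank < P.rank) :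
    ∃ P' Q', IsSymProj n P' ∧ IsSymProj n Q' ∧ P'.rank + 1 = P.rank ∧ Q'.rank = Q.rank + 1 ∧
      P' * Q' = P * Q ∧ Q' * P' = Q * P ∧ P' + Q' = P + Q := by
  obtain ⟨R, hR, htr, hPR, hRP, hQR, hRQ⟩ := exists_rankOne_le_orthogonal hP hQ h
  have hP' : IsSymProj n (P - R) := by
    refine ⟨?_, by rw [transpose_sub, hP.2, hR.2]⟩
    rw [sub_mul, mul_sub, mul_sub, hP.1, hPR, hRP, hR.1, sub_self, sub_zero]
  have hQ' : IsSymProj n (Q + R) := by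
    refine ⟨?_, by rw [transpose_add, hQ.2, hR.2]⟩
    rw [add_mul, mul_add, mul_add, hQ.1, hQR, hRQ, hR.1, add_zero, zero_add]
  refine ⟨P - R, Q + R, hP', hQ', ?_, ?_, ?_, ?_, by abel⟩
  · have := rank_eq_trace_of_isIdempotentElem hP'.1
    rw [trace_sub, ← rank_eq_trace_of_isIdempotentElem hP.1, htr] at this
    exact_mod_cast eq_sub_iff_add_eq.mp this
  · have := rank_eq_trace_of_isIdempotentElem hQ'.1
    rw [trace_add, ← rank_eq_trace_of_isIdempotentElem hQ.1, htr] at this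
    exact_mod_cast this
  · rw [sub_mul, mul_add, mul_add, hPR, hRQ, hR.1, zero_add, add_sub_cancel_right]
  · rw [mul_sub, add_mul, add_mul, hQR, hRP, hR.1, zero_add, add_sub_cancel_right]

end IsSymProj

theorem List.prod_finRange_map_C_add_X_mul_C {R : Type*} [Semiring R] {m : ℕ}
    (F : Fin m → Bool → R) :
    ((List.finRange m).map fun i => C (F i false) + X * C (F i true)).prod =
      ∑ δ : Fin m → Bool,
        C ((List.finRange m).map fun i => F i (δ i)).prod * X ^ (∑ i, if δ i then 1 else 0) := by
  induction m with
  | zero => simp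
  | succ m ih =>
    rw [← (Fin.consEquiv fun _ => Bool).sum_comp, Fintype.sum_prod_type, Fintype.sum_bool]
    simp only [List.finRange_succ, List.map_cons, List.map_map, List.prod_cons, Function.comp_def,
      Fin.consEquiv_apply, Fin.cons_zero, Fin.cons_succ, Fin.sum_univ_succ, ih (fun i => F i.succ),
      add_mul, Finset.mul_sum]
    rw [← Finset.sum_add_distrib]
    refine Finset.sum_congr rfl fun δ _ => ?_
    simp only [if_true, Bool.false_eq_true, if_false, zero_add, C_mul, pow_add, pow_one, mul_assoc,
      add_comm]
    congr 1
    rw [(commute_X _).left_comm]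
    congr 1
    exact (commute_X _).left_comm _

theorem List.prod_map_finRange_eq_of_adjacent {M : Type*} [Monoid M] {m : ℕ} {g g' : Fin m → M}
    (i j : Fin m) (hij : (i : ℕ) + 1 = j) (hmul : g' i * g' j = g i * g j)
    (hother : ∀ k, k ≠ i → k ≠ j → g' k = g k) :
    ((List.finRange m).map g').prod = ((List.finRange m).map g).prod := by
  induction m with
  | zero => exact i.elim0
  | succ m ih =>
    rw [List.finRange_succ, List.map_cons, List.map_cons, List.prod_cons, List.prod_cons,
      List.map_map, List.map_map]
    cases i using Fin.cases with
    | zero =>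
      obtain ⟨m, rfl⟩ : ∃ m', m = m' + 1 := Nat.exists_eq_add_one.mpr (by omega)
      obtain rfl : j = 1 := Fin.ext (by simp [← hij])
      rw [List.finRange_succ, List.map_cons, List.map_cons, List.prod_cons, List.prod_cons,
        ← mul_assoc, ← mul_assoc]
      simp only [Function.comp_apply, Fin.succ_zero_eq_one, hmul, List.map_map]
      congr 1
      refine congrArg List.prod (List.map_congr_left fun k _ => hother _ ?_ ?_)
      · exact Fin.succ_ne_zero _
      · exact fun h => Fin.succ_ne_zero k (Fin.succ_injective _ (h.trans Fin.succ_zero_eq_one.symm))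
    | succ i =>
      obtain ⟨j, rfl⟩ := Fin.exists_succ_eq.mpr (show j ≠ 0 by rintro rfl; simp at hij)
      rw [hother 0 (Fin.succ_ne_zero i).symm (Fin.succ_ne_zero j).symm]
      congr 1
      exact ih i j (by simpa using hij) hmul fun k hi hj =>
        hother k.succ (Fin.succ_injective _ |>.ne hi) (Fin.succ_injective _ |>.ne hj)

theorem Polynomial.C_add_X_mul_C_mul {R : Type*} [Ring R] (a b c d : R) :
    (C a + X * C b) * (C c + X * C d) = C (a * c) + X * C (a * d + b * c) + X ^ 2 * C (b * d) := by
  simp only [add_mul, mul_add, C_add, C_mul, mul_assoc, X_mul, pow_two]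
  abel

theorem Polynomial.C_add_X_mul_C_one_sub_mul_eq {R : Type*} [Ring R] {U V U' V' : R}
    (hmul : U' * V' = U * V) (hadd : U' + V' = U + V) :
    (C U' + X * C (1 - U')) * (C V' + X * C (1 - V')) =
      (C U + X * C (1 - U)) * (C V + X * C (1 - V)) := by
  have expand (U V : R) : U * (1 - V) + (1 - U) * V = U + V - (U * V + U * V) ∧
      (1 - U) * (1 - V) = 1 - (U + V) + U * V := ⟨by noncomm_ring, by noncomm_ring⟩
  simp only [C_add_X_mul_C_mul, (expand _ _).1, (expand _ _).2, hmul, hadd]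

theorem Aker_eq_mul_coeff (n K : ℕ) (P : Fin (K-1) → Matrix (Fin n) (Fin n) ℝ)
    (H : Matrix (Fin n) (Fin n) ℝ) (j : Fin K) :
    Aker n K P H j =
      H * (((List.finRange (K-1)).map fun i => C (P i) + X * C (1 - P i)).prod).coeff j := by
  have hgen :=
    List.prod_finRange_map_C_add_X_mul_C fun i (b : Bool) => if b then 1 - P i else P i
  simp only [Bool.false_eq_true, if_false, if_true] at hgen
  rw [hgen, finsetSum_coeff, Finset.mul_sum, Aker, Finset.sum_filter]
  refine Finset.sum_congr rfl fun δ _ => ?_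
  rw [coeff_C_mul_X_pow, mul_ite, mul_zero]
  exact if_congr eq_comm rfl rfl

theorem Aker_update_update (n K : ℕ) (P : Fin (K-1) → Matrix (Fin n) (Fin n) ℝ)
    (H : Matrix (Fin n) (Fin n) ℝ) {i j : Fin (K-1)} (hij : (i : ℕ) + 1 = j ∨ (j : ℕ) + 1 = i)
    {A B : Matrix (Fin n) (Fin n) ℝ} (hAB : A * B = P i * P j) (hBA : B * A = P j * P i)
    (hsum : A + B = P i + P j) :
    Aker n K (Function.update (Function.update P i A) j B) H = Aker n K P H := by
  have hne : i ≠ j := fun h => by subst h; omega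
  set P' := Function.update (Function.update P i A) j B
  have hPi : P' i = A := by simp [P', hne]
  have hPj : P' j = B := by simp [P']
  have hother (k : Fin (K-1)) (hi : k ≠ i) (hj : k ≠ j) : P' k = P k := by simp [P', hi, hj]
  funext k
  rw [Aker_eq_mul_coeff, Aker_eq_mul_coeff]
  congr 2
  rcases hij with hij | hji
  · refine List.prod_map_finRange_eq_of_adjacent i j hij ?_ fun k hi hj => by rw [hother k hi hj]
    exact C_add_X_mul_C_one_sub_mul_eq (by rw [hPi, hPj, hAB]) (by rw [hPi, hPj, hsum])
  · refine List.prod_map_finRange_eq_of_adjacent j i hji ?_ fun k hj hi => by rw [hother k hi hj]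
    exact C_add_X_mul_C_one_sub_mul_eq (by rw [hPi, hPj, hBA])
      (by rw [hPi, hPj, add_comm, hsum, add_comm])

theorem canonRank_succ (m k : ℕ) :
    canonRank (m + 1) k = Fin.cons (k / (m + 1)) (canonRank m (k - k / (m + 1))) := by
  funext i
  cases i using Fin.cases with
  | zero => simp [canonRank, Nat.lt_succ_iff.mp (Nat.mod_lt k m.succ_pos)]
  | succ i =>
    have hm : 0 < m := i.pos
    obtain ⟨q, t, ht, rfl⟩ : ∃ q t, t ≤ m ∧ k = t + (m + 1) * q :=
      ⟨k / (m + 1), k % (m + 1), Nat.lt_succ_iff.mp (Nat.mod_lt k m.succ_pos),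
        (Nat.mod_add_div k (m + 1)).symm⟩
    have hq : (t + (m + 1) * q) / (m + 1) = q := by
      rw [Nat.add_mul_div_left _ _ m.succ_pos, Nat.div_eq_of_lt (Nat.lt_succ_of_le ht), zero_add]
    have hsub : t + (m + 1) * q - q = t + m * q := by rw [add_mul, one_mul]; omega
    simp only [canonRank, Fin.cons_succ, Fin.val_succ, hq, hsub, Nat.add_mul_div_left _ _ hm,
      Nat.add_mul_mod_self_left, Nat.mod_eq_of_lt (Nat.lt_succ_of_le ht)]
    rcases ht.lt_or_eq with ht | rfl
    · rw [Nat.div_eq_of_lt ht, Nat.mod_eq_of_lt ht]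
      split_ifs <;> omega
    · rw [Nat.div_self hm, Nat.mod_self]
      split_ifs <;> omega

theorem sum_canonRank_succ (m k : ℕ) : ∑ i, canonRank (m + 1) k i = k := by
  induction m generalizing k with
  | zero => simp [canonRank_succ]
  | succ m ih =>
    rw [canonRank_succ, Fin.sum_cons, ih]
    have := Nat.div_le_self k (m + 1 + 1)
    omega

theorem canonRank_le {m k n : ℕ} (hk : k ≤ m * n) (i : Fin m) : canonRank m k i ≤ n := by
  have hm : 0 < m := i.pos
  have hdiv := Nat.div_add_mod k m
  have hmod := Nat.mod_lt k hm
  unfold canonRank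
  split_ifs with h
  · have : m * (k / m) < m * n := by have := i.isLt; omega
    have := Nat.lt_of_mul_lt_mul_left this
    omega
  · simpa using Nat.div_le_of_le_mul hk

theorem Nat.div_lt_of_add_div_lt {y s m : ℕ} (h : (y + s) / (m + 2) < y) : s / (m + 1) < y := by
  rw [Nat.div_lt_iff_lt_mul (by omega)] at h ⊢
  nlinarith

theorem Nat.lt_div_of_lt_add_div {y s m : ℕ} (h : y < (y + s) / (m + 2)) : y < s / (m + 1) := by
  rw [Nat.lt_iff_add_one_le, Nat.le_div_iff_mul_le (by omega)] at h ⊢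
  nlinarith

def RankStep (m : ℕ) (r r' : Fin m → ℕ) : Prop :=
  ∃ i j : Fin m, ((i : ℕ) + 1 = j ∨ (j : ℕ) + 1 = i) ∧ r j < r i ∧
    r' = Function.update (Function.update r i (r i - 1)) j (r j + 1)

theorem RankStep.cons {m : ℕ} {r r' : Fin m → ℕ} (h : RankStep m r r') (x : ℕ) :
    RankStep (m + 1) (Fin.cons x r) (Fin.cons x r') := by
  obtain ⟨i, j, hij, hlt, rfl⟩ := h
  refine ⟨i.succ, j.succ, by simpa using hij, by simpa using hlt, ?_⟩
  simp only [Fin.cons_succ, Fin.cons_update]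

theorem rankStep_cons_cons_of_lt {m x y : ℕ} (t : Fin m → ℕ) (h : y < x) :
    RankStep (m + 2) (Fin.cons x (Fin.cons y t)) (Fin.cons (x - 1) (Fin.cons (y + 1) t)) := by
  refine ⟨0, 1, Or.inl rfl, h, ?_⟩
  rw [Fin.update_cons_zero, ← Fin.succ_zero_eq_one, ← Fin.cons_update, Fin.update_cons_zero]
  rfl

theorem rankStep_cons_cons_of_gt {m x y : ℕ} (t : Fin m → ℕ) (h : x < y) :
    RankStep (m + 2) (Fin.cons x (Fin.cons y t)) (Fin.cons (x + 1) (Fin.cons (y - 1) t)) := by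
  refine ⟨1, 0, Or.inr rfl, h, ?_⟩
  rw [← Fin.succ_zero_eq_one, ← Fin.cons_update, Fin.update_cons_zero, Fin.update_cons_zero]
  rfl

theorem reflTransGen_cons_canonRank {m : ℕ}
    (ih : ∀ t : Fin m → ℕ, Relation.ReflTransGen (RankStep m) t (canonRank m (∑ i, t i)))
    (x : ℕ) (t : Fin m → ℕ) :
    Relation.ReflTransGen (RankStep (m + 1)) (Fin.cons x t)
      (canonRank (m + 1) (x + ∑ i, t i)) := by
  have balanceTail (y : ℕ) (t : Fin m → ℕ) : Relation.ReflTransGen (RankStep (m + 1))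
      (Fin.cons y t) (Fin.cons y (canonRank m (∑ i, t i))) :=
    (ih t).lift _ fun _ _ h => h.cons y
  generalize hT : x + ∑ i, t i = T
  obtain ⟨q, hq⟩ : ∃ q, T / (m + 1) = q := ⟨_, rfl⟩
  -- `q` is the head of `canonRank (m + 1) T`, and `d` bounds the distance of the head `y` from it.
  suffices h : ∀ d y (t : Fin m → ℕ), y + ∑ i, t i = T → y ≤ q + d → q ≤ y + d →
      Relation.ReflTransGen (RankStep (m + 1)) (Fin.cons y t) (canonRank (m + 1) T) from
    h (x + q) x t hT (by omega) (by omega)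
  intro d
  induction d with
  | zero =>
    intro y t hyt h1 h2
    obtain rfl : y = q := by omega
    rw [canonRank_succ, hq, show T - y = ∑ i, t i by omega]
    exact balanceTail y t
  | succ d ihd =>
    intro y t hyt h1 h2
    by_cases hin : y ≤ q + d ∧ q ≤ y + d
    · exact ihd y t hyt hin.1 hin.2
    obtain ⟨m, rfl⟩ : ∃ m', m = m' + 1 := Nat.exists_eq_add_one.mpr <| Nat.pos_of_ne_zero <| by
      rintro rfl
      simp only [Finset.univ_eq_empty, Finset.sum_empty, add_zero] at hyt hq
      omega
    refine (balanceTail y t).trans ?_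
    rw [canonRank_succ m]
    set s := ∑ i, t i
    set rest := canonRank m (s - s / (m + 1))
    have hs : s / (m + 1) + ∑ i, rest i = s := by
      rw [← Fin.sum_cons, ← canonRank_succ, sum_canonRank_succ]
    rcases Nat.lt_or_gt_of_ne (show y ≠ q by omega) with hlt | hgt
    · have hc := Nat.lt_div_of_lt_add_div (by rwa [hyt, hq])
      refine .head (rankStep_cons_cons_of_gt rest hc) (ihd _ _ ?_ (by omega) (by omega))
      rw [Fin.sum_cons]
      omega
    · have hc := Nat.div_lt_of_add_div_lt (by rwa [hyt, hq])
      refine .head (rankStep_cons_cons_of_lt rest hc) (ihd _ _ ?_ (by omega) (by omega))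
      rw [Fin.sum_cons]
      omega

theorem reflTransGen_rankStep_canonRank (m : ℕ) (r : Fin m → ℕ) :
    Relation.ReflTransGen (RankStep m) r (canonRank m (∑ i, r i)) := by
  induction m with
  | zero => convert Relation.ReflTransGen.refl
  | succ m ih =>
    rw [← Fin.cons_self_tail r, Fin.sum_cons]
    exact reflTransGen_cons_canonRank ih _ _

theorem SOCK_subset_of_rankStep {n K : ℕ} {r r' : Fin (K-1) → ℕ} (h : RankStep (K-1) r r') :
    SOCK n K r ⊆ SOCK n K r' := by
  obtain ⟨i, j, hij, hlt, rfl⟩ := h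
  rintro _ ⟨P, H, hP, hH, hdet, rfl⟩
  obtain ⟨A, B, hA, hB, hrA, hrB, hAB, hBA, hsum⟩ :=
    (hP i).1.exists_rank_transfer (hP j).1 (by rw [(hP i).2, (hP j).2]; exact hlt)
  refine ⟨Function.update (Function.update P i A) j B, H, fun k => ?_, hH, hdet,
    (Aker_update_update n K P H hij hAB hBA hsum).symm⟩
  rcases eq_or_ne k j with rfl | hkj
  · simp [hB, hrB, (hP k).2]
  rcases eq_or_ne k i with rfl | hki
  · simp only [Function.update_of_ne hkj, Function.update_self]
    exact ⟨hA, by rw [← (hP k).2]; omega⟩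
  · simp only [Function.update_of_ne hkj, Function.update_of_ne hki]
    exact hP k

theorem SOCK_subset_of_reflTransGen {n K : ℕ} {r r' : Fin (K-1) → ℕ}
    (h : Relation.ReflTransGen (RankStep (K-1)) r r') : SOCK n K r ⊆ SOCK n K r' := by
  induction h with
  | refl => exact subset_rfl
  | tail _ hstep ih => exact ih.trans (SOCK_subset_of_rankStep hstep)

theorem stmt3_general (n K : ℕ) :
    SOCKall n K = ⋃ k ∈ Finset.range ((K-1) * n + 1), SOCK n K (canonRank (K-1) k) := by
  apply Set.Subset.antisymm
  · simp only [SOCKall, Set.iUnion₂_subset_iff, Set.mem_ofPred_eq]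
    intro r hr
    have hsum : ∑ i, r i ≤ (K-1) * n := by
      simpa using Finset.sum_le_card_nsmul Finset.univ r n fun i _ => hr i
    exact (SOCK_subset_of_reflTransGen (reflTransGen_rankStep_canonRank _ r)).trans
      (Set.subset_biUnion_of_mem (u := fun k => SOCK n K (canonRank (K-1) k))
        (Finset.mem_coe.mpr (Finset.mem_range_succ_iff.mpr hsum)))
  · simp only [SOCKall, Set.iUnion₂_subset_iff, Finset.mem_range_succ_iff]
    intro k hk
    exact Set.subset_biUnion_of_mem (u := fun r => SOCK n K r) fun i => canonRank_le hk i

theorem stmt3 (n K : ℕ) (hn : 1 ≤ n) (hK : 2 ≤ K) :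
    SOCKall n K = ⋃ k ∈ Finset.range ((K-1) * n + 1), SOCK n K (canonRank (K-1) k) :=
  stmt3_general n K
end

section
/- If r is a rank tuple with |r_i − r_j| ≤ 1 for all indices i, j and Σ_i r_i = k, then 𝒞(r) = 𝒞_k. -/
open Matrix

open Module

/-! The kernel `𝒜(P, H)` is determined by its generating polynomial
`∑ⱼ zʲ Aⱼ = H ∏ᵢ (Pᵢ + z (1 - Pᵢ))`, in which the product of two adjacent factors only depends
on `Pᵢ + Pᵢ₊₁` and `Pᵢ Pᵢ₊₁`. Two orthogonal projections `p, q` can be replaced by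
`p - e + f` and `q - f + e`, where `e` and `f` project onto `range p ⊓ ker q` and
`range q ⊓ ker p`: this keeps `p + q` and `p q` and exchanges the ranks, since
`rank e + rank (q p) = rank p`, `rank f + rank (p q) = rank q` and `rank (q p) = rank (p q)`.
Hence `𝒞(r)` is invariant under adjacent transpositions of `r`, so under all permutations, and
sorting a balanced tuple with sum `k` produces `r^(k)`. -/

section StarRing

variable {R : Type*} [Ring R] [StarRing R] {p q e f : R}

theorem IsStarProjection.exchange (hp : IsStarProjection p) (hq : IsStarProjection q)
    (he : IsStarProjection e) (hf : IsStarProjection f)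
    (hpe : p * e = e) (hqe : q * e = 0) (hqf : q * f = f) (hpf : p * f = 0) :
    IsStarProjection (p - e + f) ∧ IsStarProjection (q - f + e) ∧
      (p - e + f) + (q - f + e) = p + q ∧ (p - e + f) * (q - f + e) = p * q := by
  have adj {a b : R} (ha : IsStarProjection a) (hb : IsStarProjection b) {c : R}
      (h : a * b = c) : b * a = star c := by
    rw [← h, star_mul, ha.isSelfAdjoint.star_eq, hb.isSelfAdjoint.star_eq]
  have hep : e * p = e := by simpa [he.isSelfAdjoint.star_eq] using adj hp he hpe
  have heq : e * q = 0 := by simpa using adj hq he hqe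
  have hfp : f * p = 0 := by simpa using adj hp hf hpf
  have hfq : f * q = f := by simpa [hf.isSelfAdjoint.star_eq] using adj hq hf hqf
  have hef : e * f = 0 := by rw [← hqf, ← mul_assoc, heq, zero_mul]
  have hfe : f * e = 0 := by rw [← hpe, ← mul_assoc, hfp, zero_mul]
  refine ⟨(he.sub_of_mul_eq_right hp hpe).add hf (by rw [sub_mul, hpf, hef, sub_zero]),
    (hf.sub_of_mul_eq_right hq hqf).add he (by rw [sub_mul, hqe, hfe, sub_zero]),
    by abel, ?_⟩
  simp only [mul_add, add_mul, mul_sub, sub_mul, hpe, hpf, heq, hef, hfe, hfq,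
    he.isIdempotentElem.eq, hf.isIdempotentElem.eq]
  abel

end StarRing

section FiniteDimensional

variable {K V W U : Type*} [DivisionRing K] [AddCommGroup V] [Module K V] [AddCommGroup W]
  [Module K W] [AddCommGroup U] [Module K U] [FiniteDimensional K W]

theorem LinearMap.finrank_range_inf_ker_add_finrank_range_comp (p : V →ₗ[K] W) (q : W →ₗ[K] U) :
    finrank K ↥(range p ⊓ ker q) + finrank K (range (q ∘ₗ p)) = finrank K (range p) := by
  have h := (q.domRestrict (range p)).finrank_range_add_finrank_ker
  rw [range_domRestrict, ← range_comp, ker_domRestrict, ← Submodule.finrank_map_subtype_eq,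
    Submodule.map_comap_subtype] at h
  lia

end FiniteDimensional

section Trace

variable {K M : Type*} [Field K] [TopologicalSpace M] [AddCommGroup M] [Module K M]
  [FiniteDimensional K M]

namespace ContinuousLinearMap

theorem IsIdempotentElem.trace_eq_finrank_range {T : M →L[K] M} (hT : IsIdempotentElem T) :
    LinearMap.trace K M T = finrank K T.range :=
  (LinearMap.IsIdempotentElem.isProj_range _ (IsIdempotentElem.toLinearMap hT)).trace

theorem finrank_range_sub_add [IsTopologicalAddGroup M] [CharZero K] {a b c : M →L[K] M}
    (ha : IsIdempotentElem a) (hb : IsIdempotentElem b) (hc : IsIdempotentElem c)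
    (habc : IsIdempotentElem (a - b + c)) :
    finrank K (a - b + c).range + finrank K b.range = finrank K a.range + finrank K c.range := by
  have h := IsIdempotentElem.trace_eq_finrank_range habc
  rw [toLinearMap_add, toLinearMap_sub, map_add, map_sub,
    IsIdempotentElem.trace_eq_finrank_range ha, IsIdempotentElem.trace_eq_finrank_range hb,
    IsIdempotentElem.trace_eq_finrank_range hc] at h
  exact_mod_cast (by linear_combination -h :
    (finrank K (a - b + c).range : K) + finrank K b.range = finrank K a.range + finrank K c.range)

end ContinuousLinearMap

end Trace

section InnerProductSpace

variable {𝕜 E : Type*} [RCLike 𝕜] [NormedAddCommGroup E] [InnerProductSpace 𝕜 E]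
  [CompleteSpace E] [FiniteDimensional 𝕜 E]

namespace ContinuousLinearMap

theorem finrank_range_star (T : E →L[𝕜] E) : finrank 𝕜 (star T).range = finrank 𝕜 T.range := by
  rw [star_eq_adjoint, ← adjoint_toLinearMap, LinearMap.finrank_range_adjoint]

theorem exists_isStarProjection_mul_eq_self_and_mul_eq_zero {p : E →L[𝕜] E}
    (hp : IsIdempotentElem p) (q : E →L[𝕜] E) :
    ∃ e : E →L[𝕜] E, IsStarProjection e ∧ p * e = e ∧ q * e = 0 ∧
      finrank 𝕜 e.range + finrank 𝕜 (q * p).range = finrank 𝕜 p.range := by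
  set W := p.range ⊓ q.ker
  refine ⟨W.starProjection, isStarProjection_starProjection, ?_, ?_, ?_⟩
  · rw [← coe_inj, toLinearMap_mul, Module.End.mul_eq_comp,
      LinearMap.IsIdempotentElem.comp_eq_right_iff (IsIdempotentElem.toLinearMap hp),
      W.range_starProjection]
    exact inf_le_left
  · ext x
    exact (W.starProjection_apply_mem x).2
  · rw [W.range_starProjection, toLinearMap_mul]
    exact LinearMap.finrank_range_inf_ker_add_finrank_range_comp _ _

theorem exists_isStarProjection_exchange {p q : E →L[𝕜] E} (hp : IsStarProjection p)
    (hq : IsStarProjection q) :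
    ∃ p' q' : E →L[𝕜] E, IsStarProjection p' ∧ IsStarProjection q' ∧
      finrank 𝕜 p'.range = finrank 𝕜 q.range ∧ finrank 𝕜 q'.range = finrank 𝕜 p.range ∧
      p' + q' = p + q ∧ p' * q' = p * q := by
  obtain ⟨e, he, hpe, hqe, hrk_e⟩ :=
    exists_isStarProjection_mul_eq_self_and_mul_eq_zero hp.isIdempotentElem q
  obtain ⟨f, hf, hqf, hpf, hrk_f⟩ :=
    exists_isStarProjection_mul_eq_self_and_mul_eq_zero hq.isIdempotentElem p
  obtain ⟨hp', hq', hadd, hmul⟩ := hp.exchange hq he hf hpe hqe hqf hpf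
  have hrk_pq : finrank 𝕜 (q * p).range = finrank 𝕜 (p * q).range := by
    rw [← finrank_range_star (p * q), star_mul, hp.isSelfAdjoint.star_eq,
      hq.isSelfAdjoint.star_eq]
  have hrk_p' := finrank_range_sub_add hp.isIdempotentElem he.isIdempotentElem
    hf.isIdempotentElem hp'.isIdempotentElem
  have hrk_q' := finrank_range_sub_add hq.isIdempotentElem hf.isIdempotentElem
    he.isIdempotentElem hq'.isIdempotentElem
  exact ⟨_, _, hp', hq', by omega, by omega, hadd, hmul⟩

end ContinuousLinearMap

end InnerProductSpace

namespace Matrix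

variable {𝕜 ι : Type*} [RCLike 𝕜] [Fintype ι] [DecidableEq ι]

theorem rank_eq_finrank_range_toEuclideanCLM (A : Matrix ι ι 𝕜) :
    A.rank = finrank 𝕜 (toEuclideanCLM (𝕜 := 𝕜) A).range := by
  rw [A.rank_eq_finrank_range_toLin (EuclideanSpace.basisFun ι 𝕜).toBasis
    (EuclideanSpace.basisFun ι 𝕜).toBasis]
  rfl

theorem exists_isStarProjection_exchange {P Q : Matrix ι ι 𝕜} (hP : IsStarProjection P)
    (hQ : IsStarProjection Q) :
    ∃ P' Q' : Matrix ι ι 𝕜, IsStarProjection P' ∧ IsStarProjection Q' ∧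
      P'.rank = Q.rank ∧ Q'.rank = P.rank ∧ P' + Q' = P + Q ∧ P' * Q' = P * Q := by
  let Φ := toEuclideanCLM (n := ι) (𝕜 := 𝕜)
  obtain ⟨p', q', hp', hq', hrk_p', hrk_q', hadd, hmul⟩ :=
    ContinuousLinearMap.exists_isStarProjection_exchange (hP.map Φ) (hQ.map Φ)
  refine ⟨Φ.symm p', Φ.symm q', hp'.map Φ.symm, hq'.map Φ.symm, ?_, ?_, ?_, ?_⟩
  · rwa [rank_eq_finrank_range_toEuclideanCLM, rank_eq_finrank_range_toEuclideanCLM,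
      StarAlgEquiv.apply_symm_apply]
  · rwa [rank_eq_finrank_range_toEuclideanCLM, rank_eq_finrank_range_toEuclideanCLM,
      StarAlgEquiv.apply_symm_apply]
  · rw [← map_add, hadd, ← map_add, StarAlgEquiv.symm_apply_apply]
  · rw [← map_mul, hmul, ← map_mul, StarAlgEquiv.symm_apply_apply]

end Matrix

theorem sum_pow_smul_prod_ofFn_ite {R A : Type*} [CommSemiring R] [Semiring A] [Algebra R A]
    (z : R) : ∀ {m : ℕ} (a b : Fin m → A),
    ∑ δ : Fin m → Bool, z ^ (∑ i, if δ i then 1 else 0) •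
        (List.ofFn fun i => if δ i then b i else a i).prod =
      (List.ofFn fun i => a i + z • b i).prod
  | 0, _, _ => by simp
  | m + 1, a, b => by
    rw [← (Fin.consEquiv fun _ => Bool).sum_comp, Fintype.sum_prod_type, Fintype.sum_bool]
    simp only [Fin.consEquiv_apply, Fin.sum_univ_succ, Fin.cons_zero, Fin.cons_succ, List.ofFn_succ,
      List.prod_cons]
    rw [add_mul, ← sum_pow_smul_prod_ofFn_ite z, Finset.mul_sum, Finset.mul_sum, add_comm]
    congr 1 <;> refine Finset.sum_congr rfl fun δ _ => ?_
    · simp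
    · simp [pow_add, mul_smul, smul_comm z]

theorem Matrix.ext_of_forall_sum_pow_smul_eq {R m n : Type*} [CommRing R] [IsDomain R]
    [Infinite R] {K : ℕ} {A B : Fin K → Matrix m n R}
    (h : ∀ z : R, ∑ j : Fin K, z ^ (j : ℕ) • A j = ∑ j : Fin K, z ^ (j : ℕ) • B j) : A = B := by
  classical
  funext j
  ext a b
  have : Polynomial.ofFn K (fun j => A j a b) = Polynomial.ofFn K (fun j => B j a b) :=
    Polynomial.funext fun z => by
      simpa [Polynomial.ofFn_eq_sum_monomial, Polynomial.eval_finsetSum, Matrix.sum_apply,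
        mul_comm] using congr($(h z) a b)
  exact congrFun (Polynomial.injective_ofFn K this) j

theorem List.prod_ofFn_eq_of_adjacent {M : Type*} [Monoid M] :
    ∀ {m : ℕ} {f g : Fin m → M} {i j : Fin m}, (j : ℕ) = i + 1 →
      (∀ l, l ≠ i → l ≠ j → f l = g l) → f i * f j = g i * g j →
      (List.ofFn f).prod = (List.ofFn g).prod
  | 0, _, _, i, _, _, _, _ => i.elim0
  | m + 1, f, g, i, j, hij, hout, hpair => by
    rw [List.ofFn_succ, List.ofFn_succ, List.prod_cons, List.prod_cons]
    induction i using Fin.cases with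
    | zero =>
      obtain ⟨m, rfl⟩ : ∃ m', m = m' + 1 := ⟨m - 1, by omega⟩
      obtain rfl : j = 1 := Fin.ext hij
      rw [List.ofFn_succ, List.ofFn_succ, List.prod_cons, List.prod_cons, ← mul_assoc, ← mul_assoc,
        Fin.succ_zero_eq_one, hpair]
      congr 3 with l
      exact hout _ (Fin.succ_ne_zero _) (by simp [Fin.ext_iff])
    | succ i =>
      obtain ⟨j, rfl⟩ : ∃ j' : Fin m, j = j'.succ := ⟨j.pred (by simp [Fin.ext_iff, hij]), by simp⟩
      rw [hout 0 (Fin.succ_ne_zero _).symm (Fin.succ_ne_zero _).symm]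
      congr 1
      exact prod_ofFn_eq_of_adjacent (by simpa using hij)
        (fun l hi hj => hout _ (by simpa using hi) (by simpa using hj)) hpair

theorem add_smul_one_sub_mul_add_smul_one_sub {R A : Type*} [CommRing R] [Ring A] [Algebra R A]
    {a b a' b' : A} (hadd : a' + b' = a + b) (hmul : a' * b' = a * b) (z : R) :
    (a' + z • (1 - a')) * (b' + z • (1 - b')) = (a + z • (1 - a)) * (b + z • (1 - b)) := by
  have expand (x y : A) : (x + z • (1 - x)) * (y + z • (1 - y)) =
      x * y + z • (x + y - 2 • (x * y)) + (z * z) • (1 - (x + y) + x * y) := by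
    simp only [mul_add, add_mul, mul_sub, sub_mul, smul_mul_assoc, mul_smul_comm, smul_smul,
      mul_one, one_mul, smul_sub, smul_add, two_smul]
    abel
  rw [expand, expand, hadd, hmul]

theorem sum_pow_smul_Aker {n K : ℕ} (hK : 0 < K) (P : Fin (K-1) → Matrix (Fin n) (Fin n) ℝ)
    (H : Matrix (Fin n) (Fin n) ℝ) (z : ℝ) :
    ∑ j : Fin K, z ^ (j : ℕ) • Aker n K P H j =
      H * (List.ofFn fun i => P i + z • (1 - P i)).prod := by
  have hw (δ : Fin (K-1) → Bool) : (∑ i, if δ i then 1 else 0) ∈ Finset.range K := by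
    have : (∑ i, if δ i then 1 else 0) ≤ K - 1 := by
      simpa [Finset.sum_boole] using Finset.card_le_univ (Finset.univ.filter fun i => δ i)
    exact Finset.mem_range.2 (by omega)
  rw [← sum_pow_smul_prod_ofFn_ite, Finset.mul_sum,
    ← Finset.sum_fiberwise_of_maps_to (fun δ _ => hw δ), ← Fin.sum_univ_eq_sum_range]
  refine Finset.sum_congr rfl fun j _ => ?_
  simp only [Aker, ← List.ofFn_eq_map, Finset.smul_sum]
  refine Finset.sum_congr rfl fun δ hδ => ?_
  rw [(Finset.mem_filter.1 hδ).2, mul_smul_comm]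

theorem Aker_eq_of_adjacent {n K : ℕ} {P P' : Fin (K-1) → Matrix (Fin n) (Fin n) ℝ}
    (H : Matrix (Fin n) (Fin n) ℝ) {i j : Fin (K-1)} (hij : (j : ℕ) = i + 1)
    (hout : ∀ l, l ≠ i → l ≠ j → P' l = P l) (hadd : P' i + P' j = P i + P j)
    (hmul : P' i * P' j = P i * P j) : Aker n K P' H = Aker n K P H := by
  have hK : 0 < K := by omega
  refine Matrix.ext_of_forall_sum_pow_smul_eq fun z => ?_
  rw [sum_pow_smul_Aker hK, sum_pow_smul_Aker hK,
    List.prod_ofFn_eq_of_adjacent hij (fun l hi hj => by rw [hout l hi hj])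
      (add_smul_one_sub_mul_add_smul_one_sub hadd hmul z)]

theorem isSymProj_iff_isStarProjection {n : ℕ} {P : Matrix (Fin n) (Fin n) ℝ} :
    IsSymProj n P ↔ IsStarProjection P := by
  rw [isStarProjection_iff, IsSelfAdjoint, Matrix.star_eq_conjTranspose,
    Matrix.conjTranspose_eq_transpose_of_trivial]
  rfl

theorem Fin.perm_mem_mclosure_swap_adjacent {m : ℕ} (σ : Equiv.Perm (Fin m)) :
    σ ∈ Submonoid.closure {τ | ∃ i j : Fin m, (j : ℕ) = i + 1 ∧ τ = Equiv.swap i j} := by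
  cases m with
  | zero => exact Subsingleton.elim σ 1 ▸ one_mem _
  | succ m =>
    refine Submonoid.closure_mono ?_
      (Equiv.Perm.mclosure_swap_castSucc_succ m ▸ Submonoid.mem_top σ)
    rintro _ ⟨i, rfl⟩
    exact ⟨i.castSucc, i.succ, rfl, rfl⟩

theorem SOCK_subset_comp_swap {n K : ℕ} (r : Fin (K-1) → ℕ) {i j : Fin (K-1)}
    (hij : (j : ℕ) = i + 1) : SOCK n K r ⊆ SOCK n K (r ∘ Equiv.swap i j) := by
  rintro A ⟨P, H, hP, hH, hdet, rfl⟩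
  obtain ⟨Pi, Pj, hPi, hPj, hrk_i, hrk_j, hadd, hmul⟩ := Matrix.exists_isStarProjection_exchange
    (isSymProj_iff_isStarProjection.1 (hP i).1) (isSymProj_iff_isStarProjection.1 (hP j).1)
  have hij' : i ≠ j := Fin.ne_of_val_ne (by omega)
  set P' := Function.update (Function.update P i Pi) j Pj
  have hP'i : P' i = Pi := by simp [P', hij']
  have hP'j : P' j = Pj := by simp [P']
  refine ⟨P', H, fun l => ?_, hH, hdet,
    (Aker_eq_of_adjacent H hij (fun l hi hj => by simp [P', hi, hj]) (by rw [hP'i, hP'j, hadd])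
      (by rw [hP'i, hP'j, hmul])).symm⟩
  rw [isSymProj_iff_isStarProjection]
  rcases eq_or_ne l i with rfl | hli
  · simp [hP'i, hPi, hrk_i, (hP j).2]
  rcases eq_or_ne l j with rfl | hlj
  · simp [hP'j, hPj, hrk_j, (hP i).2]
  simpa [P', hli, hlj, Equiv.swap_apply_of_ne_of_ne, isSymProj_iff_isStarProjection] using hP l

theorem SOCK_comp_swap {n K : ℕ} (r : Fin (K-1) → ℕ) {i j : Fin (K-1)}
    (hij : (j : ℕ) = i + 1) : SOCK n K (r ∘ Equiv.swap i j) = SOCK n K r := by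
  refine le_antisymm ?_ (SOCK_subset_comp_swap r hij)
  simpa [Function.comp_def] using SOCK_subset_comp_swap (n := n) (r ∘ Equiv.swap i j) hij

theorem SOCK_comp_perm {n K : ℕ} (r : Fin (K-1) → ℕ) (σ : Equiv.Perm (Fin (K-1))) :
    SOCK n K (r ∘ σ) = SOCK n K r := by
  induction Fin.perm_mem_mclosure_swap_adjacent σ using Submonoid.closure_induction
    generalizing r with
  | mem τ hτ =>
    obtain ⟨i, j, hij, rfl⟩ := hτ
    exact SOCK_comp_swap r hij
  | one => rfl
  | mul σ τ _ _ hσ hτ => rw [Equiv.Perm.coe_mul, ← Function.comp_assoc, hτ, hσ]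

theorem canonRank_apply {m k : ℕ} (i : Fin m) : canonRank m k i = (k + i) / m := by
  have hm : 0 < m := i.pos
  have hs := Nat.mod_lt k hm
  have hi := i.isLt
  conv_rhs => rw [← Nat.div_add_mod k m, add_assoc, Nat.mul_add_div hm]
  unfold canonRank
  congr 1
  split_ifs with h
  · exact (Nat.div_eq_of_lt_le (by omega) (by omega)).symm
  · exact (Nat.div_eq_of_lt (by omega)).symm

theorem eq_canonRank_of_monotone {m k : ℕ} {g : Fin m → ℕ} (hmono : Monotone g)
    (hbal : ∀ a b, g a ≤ g b + 1) (hsum : ∑ j, g j = k) : g = canonRank m k := by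
  funext i
  have hlow : m * g i ≤ k + i := calc
    m * g i = ∑ _j : Fin m, g i := by simp
    _ ≤ ∑ j, (g j + if j < i then 1 else 0) := Finset.sum_le_sum fun j _ => by
        split_ifs with h
        · exact hbal i j
        · exact hmono (not_lt.1 h)
    _ = k + i := by simp [Finset.sum_add_distrib, hsum, Finset.sum_boole, Finset.filter_gt_eq_Iio]
  have hhigh : k + i + 1 ≤ m * (g i + 1) := calc
    k + i + 1 = ∑ j, (g j + if j ≤ i then 1 else 0) := by
        simp [Finset.sum_add_distrib, hsum, Finset.sum_boole, Finset.filter_ge_eq_Iic, add_assoc]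
    _ ≤ ∑ _j : Fin m, (g i + 1) := Finset.sum_le_sum fun j _ => by
        split_ifs with h
        · exact Nat.add_le_add_right (hmono h) 1
        · exact hbal j i
    _ = m * (g i + 1) := by simp
  rw [canonRank_apply]
  exact (Nat.div_eq_of_lt_le (by linarith) (by linarith)).symm

theorem stmt5_general (n K : ℕ)
    (r : Fin (K-1) → ℕ)
    (hbal : ∀ i j, |(r i : ℤ) - (r j : ℤ)| ≤ 1)
    (k : ℕ) (hsum : ∑ i, r i = k) :
    SOCK n K r = SOCK n K (canonRank (K-1) k) := by
  rw [← SOCK_comp_perm r (Tuple.sort r)]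
  congr 1
  refine eq_canonRank_of_monotone (Tuple.monotone_sort r) (fun a b => ?_) ?_
  · have := abs_le.1 (hbal (Tuple.sort r a) (Tuple.sort r b))
    simp only [Function.comp_apply]
    omega
  · exact (Equiv.sum_comp _ r).trans hsum

theorem stmt5 (n K : ℕ) (hn : 1 ≤ n) (hK : 2 ≤ K)
    (r : Fin (K-1) → ℕ) (hr : ∀ i, r i ≤ n)
    (hbal : ∀ i j, |(r i : ℤ) - (r j : ℤ)| ≤ 1)
    (k : ℕ) (hsum : ∑ i, r i = k) :
    SOCK n K r = SOCK n K (canonRank (K-1) k) :=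
  stmt5_general n K r hbal k hsum
end

section
/- Let r be a rank tuple and 1 ≤ i ≤ K−2. If r_i ≥ 1, r_{i+1} ≤ n−1, and r_i ≤ r_{i+1} + 1, then 𝒞(r_1, …, r_i − 1, r_{i+1} + 1, …, r_{K−1}) ⊆ 𝒞(r_1, …, r_{K−1}). Symmetrically, if r_{i+1} ≥ 1, r_i ≤ n−1, and r_{i+1} ≤ r_i + 1, then 𝒞(r_1, …, r_i + 1, r_{i+1} − 1, …, r_{K−1}) ⊆ 𝒞(r_1, …, r_{K−1}). -/
open Matrix

/-!
Each summand of `A_j`, added to the summand whose `δ` has `δ_i` and `δ_{i+1}` swapped, depends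
on the adjacent projectors `P_i, P_{i+1}` only through `P_i P_{i+1}` and `P_i + P_{i+1}`, so the
kernel is unchanged by any replacement of this pair that preserves the product and the sum.
If `rank P < rank Q`, there is a unit vector `w ∈ ker P ∩ range Q`, and with `V = w wᵀ` the pair
`(P + V, Q - V)` is such a replacement which moves one unit of rank from `Q` to `P`; ranks of
idempotents are traces, so `rank (P + V) = rank P + 1` and `rank (Q - V) = rank Q - 1`.
-/

theorem Finset.sum_eq_sum_of_add_comp_eq {ι E : Type*} [AddCommMonoid E] [IsAddTorsionFree E]
    {s : Finset ι} (σ : ι ≃ ι) (hσ : ∀ x, σ x ∈ s ↔ x ∈ s) {f g : ι → E}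
    (h : ∀ x ∈ s, f x + f (σ x) = g x + g (σ x)) : ∑ x ∈ s, f x = ∑ x ∈ s, g x := by
  have hcomp (φ : ι → E) : ∑ x ∈ s, φ (σ x) = ∑ x ∈ s, φ x :=
    Finset.sum_equiv σ (fun x => (hσ x).symm) (fun _ _ => rfl)
  apply nsmul_right_injective two_ne_zero
  simp only [two_nsmul]
  nth_rewrite 2 [← hcomp f, ← hcomp g]
  rw [← Finset.sum_add_distrib, ← Finset.sum_add_distrib]
  exact Finset.sum_congr rfl h

theorem List.lt_of_mem_take_finRange {m i : ℕ} {k : Fin m} (hk : k ∈ (finRange m).take i) :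
    (k : ℕ) < i := by
  simpa using (mem_take_iff_idxOf_lt (mem_finRange k)).mp hk

theorem List.le_of_mem_drop_finRange {m i : ℕ} {k : Fin m} (hk : k ∈ (finRange m).drop i) :
    i ≤ k := by
  obtain ⟨idx, hidx, rfl⟩ := getElem_of_mem hk
  simp

theorem List.exists_forall_prod_map_finRange_eq {M : Type*} [Monoid M] {m : ℕ} (c : Fin m → M)
    {i j : Fin m} (hij : (i : ℕ) + 1 = j) :
    ∃ A B : M, ∀ f : Fin m → M, (∀ k, k ≠ i → k ≠ j → f k = c k) →
      ((finRange m).map f).prod = A * (f i * f j) * B := by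
  refine ⟨(((finRange m).take i).map c).prod, (((finRange m).drop (i + 2)).map c).prod,
    fun f hf => ?_⟩
  have hi : (i : ℕ) < (finRange m).length := by simp
  have hj : (i : ℕ) + 1 < (finRange m).length := by simp [hij]
  have hjeq : (finRange m)[(i : ℕ) + 1] = j := Fin.ext (by simp [hij])
  conv_lhs => rw [← take_append_drop (i : ℕ) (finRange m), drop_eq_getElem_cons hi,
    drop_eq_getElem_cons hj]
  have htake : ((finRange m).take i).map f = ((finRange m).take i).map c :=
    map_congr_left fun k hk => by
      have := lt_of_mem_take_finRange hk
      exact hf k (by rintro rfl; omega) (by rintro rfl; omega)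
  have hdrop : ((finRange m).drop (i + 2)).map f = ((finRange m).drop (i + 2)).map c :=
    map_congr_left fun k hk => by
      have := le_of_mem_drop_finRange hk
      exact hf k (by rintro rfl; omega) (by rintro rfl; omega)
  simp only [map_append, map_cons, prod_append, prod_cons, htake, hdrop, hjeq, getElem_finRange,
    Fin.cast_mk, Fin.eta, mul_assoc]

theorem ite_mul_ite_add_swap_eq_of_mul_eq_of_add_eq {R : Type*} [Ring R] {X Y U W : R}
    (hmul : X * Y = U * W) (hadd : X + Y = U + W) (a b : Bool) :
    (if a then 1 - X else X) * (if b then 1 - Y else Y) +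
        (if b then 1 - X else X) * (if a then 1 - Y else Y) =
      (if a then 1 - U else U) * (if b then 1 - W else W) +
        (if b then 1 - U else U) * (if a then 1 - W else W) := by
  have hboth (X Y : R) : (1 - X) * (1 - Y) = 1 - (X + Y) + X * Y := by noncomm_ring
  have hone (X Y : R) : (1 - X) * Y + X * (1 - Y) = X + Y - (X * Y + X * Y) := by noncomm_ring
  cases a <;> cases b <;> simp only [Bool.false_eq_true, if_true, if_false]
  · rw [hmul]
  · rw [add_comm (X * _), hone, add_comm (U * _), hone, hmul, hadd]
  · rw [hone, hone, hmul, hadd]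
  · rw [hboth, hboth, hmul, hadd]

namespace Matrix

theorem rank_eq_trace_of_isIdempotentElem_s8 {K ι : Type*} [Field K] [Fintype ι] [DecidableEq ι]
    {P : Matrix ι ι K} (hP : IsIdempotentElem P) : (P.rank : K) = P.trace := by
  have hP' : IsIdempotentElem P.toLin' := hP.map toLinAlgEquiv'
  rw [← trace_toLin'_eq, (LinearMap.IsIdempotentElem.isProj_range _ hP').trace]
  rfl

theorem exists_unit_vector_of_rank_lt {ι : Type*} [Fintype ι] {P Q : Matrix ι ι ℝ}
    (hQ : IsIdempotentElem Q) (h : P.rank < Q.rank) :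
    ∃ w : ι → ℝ, P *ᵥ w = 0 ∧ Q *ᵥ w = w ∧ w ⬝ᵥ w = 1 := by
  have hker : LinearMap.ker (P.mulVecLin.rangeRestrict.domRestrict
      (LinearMap.range Q.mulVecLin)) ≠ ⊥ :=
    LinearMap.ker_ne_bot_of_finrank_lt h
  obtain ⟨⟨v, x, rfl⟩, hPv, hv0⟩ := Submodule.exists_mem_ne_zero_of_ne_bot hker
  replace hPv : P *ᵥ (Q *ᵥ x) = 0 := congrArg Subtype.val hPv
  replace hv0 : Q *ᵥ x ≠ 0 := fun h => hv0 (Subtype.ext h)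
  have hQv : Q *ᵥ (Q *ᵥ x) = Q *ᵥ x := by rw [mulVec_mulVec, hQ.eq]
  have hpos : 0 < (Q *ᵥ x) ⬝ᵥ (Q *ᵥ x) := by
    simpa using dotProduct_star_self_pos_iff.mpr hv0
  refine ⟨(√((Q *ᵥ x) ⬝ᵥ (Q *ᵥ x)))⁻¹ • (Q *ᵥ x), by rw [mulVec_smul, hPv, smul_zero],
    by rw [mulVec_smul, hQv], ?_⟩
  rw [smul_dotProduct, dotProduct_smul, smul_smul, smul_eq_mul, ← mul_inv,
    Real.mul_self_sqrt hpos.le, inv_mul_cancel₀ hpos.ne']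

end Matrix

variable {n : ℕ}

theorem IsSymProj.exists_transfer {P Q : Matrix (Fin n) (Fin n) ℝ} (hP : IsSymProj n P)
    (hQ : IsSymProj n Q) (h : P.rank < Q.rank) :
    ∃ P' Q', IsSymProj n P' ∧ IsSymProj n Q' ∧ P'.rank = P.rank + 1 ∧
      Q'.rank + 1 = Q.rank ∧ P' * Q' = P * Q ∧ Q' * P' = Q * P ∧ P' + Q' = P + Q := by
  obtain ⟨hPP, hPT⟩ := hP
  obtain ⟨hQQ, hQT⟩ := hQ
  obtain ⟨w, hPw, hQw, hww⟩ := exists_unit_vector_of_rank_lt hQQ h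
  have hwP : w ᵥ* P = 0 := by rw [← hPT, vecMul_transpose, hPw]
  have hwQ : w ᵥ* Q = w := by rw [← hQT, vecMul_transpose, hQw]
  set V := vecMulVec w w
  have hVT : Vᵀ = V := transpose_vecMulVec w w
  have hVV : V * V = V := by rw [vecMulVec_mul_vecMulVec, hww, one_smul]
  have hPV : P * V = 0 := by rw [mul_vecMulVec, hPw, zero_vecMulVec]
  have hVP : V * P = 0 := by rw [vecMulVec_mul, hwP, vecMulVec_zero]
  have hQV : Q * V = V := by rw [mul_vecMulVec, hQw]
  have hVQ : V * Q = V := by rw [vecMulVec_mul, hwQ]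
  have htrV : V.trace = 1 := by rw [trace_vecMulVec, hww]
  have hP' : (P + V) * (P + V) = P + V := by
    rw [add_mul, mul_add, mul_add, hPP, hPV, hVP, hVV, add_zero, zero_add]
  have hQ' : (Q - V) * (Q - V) = Q - V := by
    rw [sub_mul, mul_sub, mul_sub, hQQ, hQV, hVQ, hVV, sub_self, sub_zero]
  refine ⟨P + V, Q - V, ⟨hP', by rw [transpose_add, hPT, hVT]⟩,
    ⟨hQ', by rw [transpose_sub, hQT, hVT]⟩, ?_, ?_, ?_, ?_, by abel⟩
  · have : ((P + V).rank : ℝ) = P.rank + 1 := by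
      rw [rank_eq_trace_of_isIdempotentElem_s8 hP', trace_add, htrV,
        rank_eq_trace_of_isIdempotentElem_s8 hPP]
    exact_mod_cast this
  · have : ((Q - V).rank : ℝ) + 1 = Q.rank := by
      rw [rank_eq_trace_of_isIdempotentElem_s8 hQ', trace_sub, htrV,
        rank_eq_trace_of_isIdempotentElem_s8 hQQ, sub_add_cancel]
    exact_mod_cast this
  · rw [add_mul, mul_sub, mul_sub, hPV, hVQ, hVV, sub_zero, sub_self, add_zero]
  · rw [sub_mul, mul_add, mul_add, hQV, hVP, hVV, zero_add, add_sub_cancel_right]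

local notation "M" => Matrix (Fin n) (Fin n) ℝ

theorem Aker_update_update_of_adjacent {K : ℕ} (P : Fin (K - 1) → M) (H : M)
    {i j : Fin (K - 1)} (hij : (i : ℕ) + 1 = j) {X Y : M} (hmul : X * Y = P i * P j)
    (hadd : X + Y = P i + P j) :
    Aker n K (Function.update (Function.update P i X) j Y) H = Aker n K P H := by
  have hne : i ≠ j := by rintro rfl; omega
  set P' := Function.update (Function.update P i X) j Y
  have hP'k : ∀ k, k ≠ i → k ≠ j → P' k = P k := fun k hki hkj => by
    simp only [P', Function.update_of_ne hkj, Function.update_of_ne hki]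
  set σ : (Fin (K - 1) → Bool) ≃ (Fin (K - 1) → Bool) :=
    (Equiv.swap i j).arrowCongr (Equiv.refl Bool)
  have hσ (δ : Fin (K - 1) → Bool) (k : Fin (K - 1)) : σ δ k = δ (Equiv.swap i j k) := rfl
  have : IsAddTorsionFree M := .of_isTorsionFree ℝ M
  funext l
  refine Finset.sum_eq_sum_of_add_comp_eq σ (fun δ => ?_) (fun δ _ => ?_)
  · simp only [Finset.mem_filter, Finset.mem_univ, true_and, hσ]
    rw [Equiv.sum_comp (Equiv.swap i j) (fun k => if δ k then 1 else 0)]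
  · obtain ⟨A, B, hAB⟩ := List.exists_forall_prod_map_finRange_eq
      (fun k => if δ k then 1 - P k else P k) hij
    have hσk : ∀ k, k ≠ i → k ≠ j → σ δ k = δ k := fun k hki hkj => by
      rw [hσ, Equiv.swap_apply_of_ne_of_ne hki hkj]
    rw [hAB _ fun k hki hkj => by rw [hP'k k hki hkj], hAB _ fun k hki hkj => by
        rw [hP'k k hki hkj, hσk k hki hkj], hAB _ fun _ _ _ => rfl,
      hAB _ fun k hki hkj => by rw [hσk k hki hkj]]
    have hsplit (Z W : M) : H * (A * Z * B) + H * (A * W * B) = H * (A * (Z + W) * B) := by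
      simp only [mul_add, add_mul]
    simp only [hsplit, hσ, Equiv.swap_apply_left, Equiv.swap_apply_right, P',
      Function.update_self, Function.update_of_ne hne]
    rw [ite_mul_ite_add_swap_eq_of_mul_eq_of_add_eq hmul hadd]

theorem SOCK_subset_SOCK_of_transfer {K : ℕ} {r r' : Fin (K - 1) → ℕ} {a b : Fin (K - 1)}
    (hab : (a : ℕ) + 1 = b ∨ (b : ℕ) + 1 = a) (h : r a < r b) (ha : r' a = r a + 1)
    (hb : r' b + 1 = r b) (hk : ∀ k, k ≠ a → k ≠ b → r' k = r k) :
    SOCK n K r ⊆ SOCK n K r' := by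
  rintro _ ⟨P, H, hP, hH, hdet, rfl⟩
  have hne : a ≠ b := by rintro rfl; omega
  obtain ⟨Pa, Pb, hPa, hPb, hra, hrb, hmul, hmul', hadd⟩ :=
    (hP a).1.exists_transfer (hP b).1 (by rwa [(hP a).2, (hP b).2])
  refine ⟨Function.update (Function.update P a Pa) b Pb, H, fun k => ?_, hH, hdet, ?_⟩
  · have hPa_rank := (hP a).2
    have hPb_rank := (hP b).2
    rcases eq_or_ne k b with rfl | hkb
    · rw [Function.update_self]
      exact ⟨hPb, by omega⟩
    rcases eq_or_ne k a with rfl | hka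
    · rw [Function.update_of_ne hne, Function.update_self]
      exact ⟨hPa, by omega⟩
    · rw [Function.update_of_ne hkb, Function.update_of_ne hka, hk k hka hkb]
      exact hP k
  · rcases hab with hab | hab
    · exact (Aker_update_update_of_adjacent P H hab hmul hadd).symm
    · rw [Function.update_comm hne]
      exact (Aker_update_update_of_adjacent P H hab hmul' (by rw [add_comm, hadd, add_comm])).symm

theorem stmt8_general (n K : ℕ)
    (r : Fin (K-1) → ℕ)
    (i : Fin (K-1)) (hi : (i : ℕ) + 1 < K - 1) :
    (1 ≤ r i → r ⟨(i : ℕ) + 1, hi⟩ + 1 ≤ n → r i ≤ r ⟨(i : ℕ) + 1, hi⟩ + 1 →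
      SOCK n K (Function.update (Function.update r i (r i - 1))
          ⟨(i : ℕ) + 1, hi⟩ (r ⟨(i : ℕ) + 1, hi⟩ + 1)) ⊆ SOCK n K r) ∧
    (1 ≤ r ⟨(i : ℕ) + 1, hi⟩ → r i + 1 ≤ n → r ⟨(i : ℕ) + 1, hi⟩ ≤ r i + 1 →
      SOCK n K (Function.update (Function.update r i (r i + 1))
          ⟨(i : ℕ) + 1, hi⟩ (r ⟨(i : ℕ) + 1, hi⟩ - 1)) ⊆ SOCK n K r) := by
  set j : Fin (K - 1) := ⟨(i : ℕ) + 1, hi⟩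
  have hne : i ≠ j := Fin.ne_of_lt (Nat.lt_succ_self i)
  have hoff (x y : ℕ) (k : Fin (K - 1)) (hki : k ≠ i) (hkj : k ≠ j) :
      r k = Function.update (Function.update r i x) j y k := by
    rw [Function.update_of_ne hkj, Function.update_of_ne hki]
  constructor
  · intro h1 _ h3
    refine SOCK_subset_SOCK_of_transfer (a := i) (b := j) (Or.inl rfl) ?_ ?_ ?_
      fun k hki hkj => hoff _ _ k hki hkj <;>
      simp only [Function.update_of_ne hne, Function.update_self] <;> omega
  · intro h1 _ h3
    refine SOCK_subset_SOCK_of_transfer (a := j) (b := i) (Or.inr rfl) ?_ ?_ ?_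
      fun k hkj hki => hoff _ _ k hki hkj <;>
      simp only [Function.update_of_ne hne, Function.update_self] <;> omega

theorem stmt8 (n K : ℕ) (hn : 1 ≤ n) (hK : 3 ≤ K)
    (r : Fin (K-1) → ℕ) (hr : ∀ p, r p ≤ n)
    (i : Fin (K-1)) (hi : (i : ℕ) + 1 < K - 1) :
    (1 ≤ r i → r ⟨(i : ℕ) + 1, hi⟩ + 1 ≤ n → r i ≤ r ⟨(i : ℕ) + 1, hi⟩ + 1 →
      SOCK n K (Function.update (Function.update r i (r i - 1))
          ⟨(i : ℕ) + 1, hi⟩ (r ⟨(i : ℕ) + 1, hi⟩ + 1)) ⊆ SOCK n K r) ∧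
    (1 ≤ r ⟨(i : ℕ) + 1, hi⟩ → r i + 1 ≤ n → r ⟨(i : ℕ) + 1, hi⟩ ≤ r i + 1 →
      SOCK n K (Function.update (Function.update r i (r i + 1))
          ⟨(i : ℕ) + 1, hi⟩ (r ⟨(i : ℕ) + 1, hi⟩ - 1)) ⊆ SOCK n K r) :=
  stmt8_general n K r i hi
end

section
/- Let P_1, …, P_{K−1} be symmetric projectors, H an n×n real matrix, and let (A_0,…,A_{K−1}) = 𝒜(P_1,…,P_{K−1},H). Define, for 0 ≤ k ≤ K−1, B_k = Σ over δ' ∈ {0,1}^{K−1} with δ'_1+⋯+δ'_{K−1} = k of H·∏_{i=1}^{K−1}((1−δ'_i)P_i + δ'_i·I), the product taken in increasing order of i. Then for every 0 ≤ j ≤ K−1, A_j = Σ_{k=0}^{j} (−1)^{j−k} · binom((K−1)−k, j−k) · B_k, where binom denotes the binomial coefficient. -/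
/-!
Both sides are coefficients of generating polynomials with matrix coefficients in a commuting
variable `t`: expanding the ordered products gives `∑ⱼ Aⱼ tʲ = H ∏ᵢ (Pᵢ + t (1 - Pᵢ))` and
`∑ₖ Bₖ tᵏ = H ∏ᵢ (Pᵢ + t)`. Since `Pᵢ + t (1 - Pᵢ) = (1 - t) Pᵢ + t` and `t`, `1 - t` are central,
the same expansion turns the first product into `∑ₖ Bₖ tᵏ (1 - t)^(K-1-k)`, and the coefficient of
`tʲ` in `tᵏ (1 - t)^(K-1-k)` is `(-1)^(j-k) * binom(K-1-k, j-k)`.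
-/

open Matrix

open Finset Polynomial

section SelectProd

variable {S : Type*} [Semiring S] {m : ℕ}

def trueCount (δ : Fin m → Bool) : ℕ := ∑ i, if δ i then 1 else 0

def selectProd (a b : Fin m → S) (δ : Fin m → Bool) : S :=
  ((List.finRange m).map fun i => if δ i then b i else a i).prod

lemma trueCount_cons (c : Bool) (ε : Fin m → Bool) :
    trueCount (Fin.cons c ε : Fin (m + 1) → Bool) = (if c then 1 else 0) + trueCount ε :=
  Fin.sum_univ_succ _

lemma trueCount_le (δ : Fin m → Bool) : trueCount δ ≤ m := by
  simpa [trueCount, ← card_filter] using card_filter_le univ fun i => δ i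

lemma selectProd_cons (a b : Fin (m + 1) → S) (c : Bool) (ε : Fin m → Bool) :
    selectProd a b (Fin.cons c ε) =
      (if c then b 0 else a 0) * selectProd (fun i => a i.succ) (fun i => b i.succ) ε := by
  simp [selectProd, List.finRange_succ, List.map_map, Function.comp_def]

lemma map_selectProd {T : Type*} [Semiring T] (f : S →+* T) (a b : Fin m → S)
    (δ : Fin m → Bool) :
    f (selectProd a b δ) = selectProd (fun i => f (a i)) (fun i => f (b i)) δ := by
  simp [selectProd, map_list_prod, List.map_map, Function.comp_def, apply_ite f]

lemma sum_boolTuple_succ {M : Type*} [AddCommMonoid M] (g : (Fin (m + 1) → Bool) → M) :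
    ∑ δ, g δ = ∑ c : Bool, ∑ ε : Fin m → Bool, g (Fin.cons c ε) := by
  rw [← (Fin.consEquiv fun _ => Bool).sum_comp, Fintype.sum_prod_type]
  rfl

theorem prod_finRange_central_mul_add {u v : S} (hu : ∀ x, Commute u x) (hv : ∀ x, Commute v x)
    (a b : Fin m → S) :
    ((List.finRange m).map fun i => v * a i + u * b i).prod =
      ∑ δ, u ^ trueCount δ * v ^ (m - trueCount δ) * selectProd a b δ := by
  induction m with
  | zero => simp [trueCount, selectProd]
  | succ m ih =>
    rw [List.finRange_succ, List.map_cons, List.prod_cons, List.map_map, Function.comp_def,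
      ih, sum_boolTuple_succ, Fintype.sum_bool, add_mul, add_comm, mul_sum, mul_sum]
    congr 1 <;> refine sum_congr rfl fun ε _ => ?_ <;>
      simp only [trueCount_cons, selectProd_cons, Bool.false_eq_true, if_true, if_false]
    all_goals
      have hc : ∀ x, Commute (u ^ trueCount ε * v ^ (m - trueCount ε)) x := fun x =>
        ((hu x).pow_left _).mul_left ((hv x).pow_left _)
    · rw [show m + 1 - (1 + trueCount ε) = m - trueCount ε by omega, pow_add, pow_one,
        mul_assoc u (u ^ _), mul_assoc u (_ * _), (hc _).left_comm, ← mul_assoc u (b 0)]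
    · rw [zero_add, show m + 1 - trueCount ε = m - trueCount ε + 1 by
        have := trueCount_le ε; omega, pow_succ', ← mul_assoc (u ^ _),
        ((hu v).pow_left _).eq, mul_assoc v (u ^ _), mul_assoc v (_ * _), (hc _).left_comm,
        ← mul_assoc v (a 0)]

end SelectProd

lemma sum_ite_le_smul_eq_sum_range {α k M : Type*} [Fintype α] [Semiring k] [AddCommMonoid M]
    [Module k M] (w : α → ℕ) (c : ℕ → k) (f : α → M) (j : ℕ) :
    ∑ a, (if w a ≤ j then c (w a) • f a else 0) =
      ∑ l ∈ range (j + 1), c l • ∑ a with w a = l, f a := by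
  simp only [sum_filter, smul_sum, smul_ite, smul_zero]
  rw [sum_comm]
  refine sum_congr rfl fun a _ => ?_
  simp [sum_ite_eq]

section Generating

variable {R : Type*} [Ring R] {m : ℕ}

lemma coeff_X_pow_mul_one_sub_X_pow (l N j : ℕ) :
    (X ^ l * (1 - X) ^ N : R[X]).coeff j =
      if l ≤ j then (-1) ^ (j - l) * (N.choose (j - l) : R) else 0 := by
  have h : (1 - X : R[X]) = -(X + C (-1)) := by simp [sub_eq_neg_add, add_comm]
  rw [coeff_X_pow_mul', h, neg_pow, ← C_1, ← C_neg, ← C_pow, coeff_C_mul, coeff_X_add_C_pow,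
    ← mul_assoc, ← pow_add]
  split_ifs with hl
  · rcases le_or_gt (j - l) N with hi | hi
    · rw [show N + (N - (j - l)) = (j - l) + 2 * (N - (j - l)) by omega, pow_add, pow_mul]
      simp
    · simp [Nat.choose_eq_zero_of_lt hi]
  · rfl

theorem sum_X_pow_mul_C_selectProd_one_sub (P : Fin m → R) :
    ∑ δ, X ^ trueCount δ * C (selectProd P (fun i => 1 - P i) δ) =
      ∑ δ, X ^ trueCount δ * (1 - X) ^ (m - trueCount δ) * C (selectProd P (fun _ => 1) δ) := by
  have hX : ∀ p : R[X], Commute X p := commute_X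
  have hX' : ∀ p : R[X], Commute (1 - X) p := fun p => (Commute.one_left p).sub_left (hX p)
  calc _ = ((List.finRange m).map fun i => 1 * C (P i) + X * C (1 - P i)).prod := by
        rw [prod_finRange_central_mul_add hX Commute.one_left]
        simp [map_selectProd]
    _ = ((List.finRange m).map fun i => (1 - X) * C (P i) + X * C 1).prod := by
        congr 2
        funext i
        simp only [map_sub, map_one, mul_sub, sub_mul, one_mul, mul_one]
        abel
    _ = _ := by
        rw [prod_finRange_central_mul_add hX hX']
        simp [map_selectProd]

end Generating

theorem sum_filter_mul_selectProd_one_sub {k R : Type*} [CommRing k] [Ring R] [Algebra k R]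
    {m : ℕ} (P : Fin m → R) (H : R) (j : ℕ) :
    ∑ δ with trueCount δ = j, H * selectProd P (fun i => 1 - P i) δ =
      ∑ l ∈ range (j + 1), ((-1 : k) ^ (j - l) * ((m - l).choose (j - l) : k)) •
        ∑ δ with trueCount δ = l, H * selectProd P (fun _ => 1) δ := by
  have coeff_left : ∀ (l : ℕ) (M : R), (C H * (X ^ l * C M)).coeff j =
      if l = j then H * M else 0 := by
    intro l M
    rw [(commute_X_pow _ _).eq, ← mul_assoc, ← C_mul, coeff_C_mul_X_pow]
    simp only [eq_comm]
  have coeff_right : ∀ (l N : ℕ) (M : R), (C H * (X ^ l * (1 - X) ^ N * C M)).coeff j =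
      if l ≤ j then ((-1 : k) ^ (j - l) * (N.choose (j - l) : k)) • (H * M) else 0 := by
    intro l N M
    rw [coeff_C_mul, coeff_mul_C, coeff_X_pow_mul_one_sub_X_pow]
    split_ifs
    · have hc : Commute H ((-1) ^ (j - l) * (N.choose (j - l) : R)) :=
        ((Commute.neg_one_right H).pow_right _).mul_right (Nat.cast_commute _ H).symm
      rw [hc.left_comm, Algebra.smul_def]
      simp
    · simp
  have hcoeff := congrArg (fun p => (C H * p).coeff j) (sum_X_pow_mul_C_selectProd_one_sub P)
  simp only [mul_sum, finsetSum_coeff, coeff_left, coeff_right] at hcoeff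
  rw [sum_filter, hcoeff, sum_ite_le_smul_eq_sum_range trueCount
    (fun l => (-1 : k) ^ (j - l) * ((m - l).choose (j - l) : k))]

theorem stmt11_general (n K : ℕ)
    (P : Fin (K-1) → Matrix (Fin n) (Fin n) ℝ)
    (H : Matrix (Fin n) (Fin n) ℝ)
    (B : ℕ → Matrix (Fin n) (Fin n) ℝ)
    (hB : ∀ k, B k = ∑ δ ∈ Finset.univ.filter
        (fun δ : Fin (K-1) → Bool => (∑ i, (if δ i then 1 else 0)) = k),
      H * ((List.finRange (K-1)).map
        (fun i => if δ i then (1 : Matrix (Fin n) (Fin n) ℝ) else P i)).prod) :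
    ∀ j : Fin K, Aker n K P H j =
      ∑ k ∈ Finset.range ((j : ℕ) + 1),
        ((-1 : ℝ) ^ ((j : ℕ) - k) * (Nat.choose ((K-1) - k) ((j : ℕ) - k))) • B k := by
  intro j
  simp only [hB]
  exact sum_filter_mul_selectProd_one_sub P H j

theorem stmt11 (n K : ℕ) (hn : 1 ≤ n) (hK : 2 ≤ K)
    (P : Fin (K-1) → Matrix (Fin n) (Fin n) ℝ) (hP : ∀ i, IsSymProj n (P i))
    (H : Matrix (Fin n) (Fin n) ℝ)
    (B : ℕ → Matrix (Fin n) (Fin n) ℝ)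
    (hB : ∀ k, B k = ∑ δ ∈ Finset.univ.filter
        (fun δ : Fin (K-1) → Bool => (∑ i, (if δ i then 1 else 0)) = k),
      H * ((List.finRange (K-1)).map
        (fun i => if δ i then (1 : Matrix (Fin n) (Fin n) ℝ) else P i)).prod) :
    ∀ j : Fin K, Aker n K P H j =
      ∑ k ∈ Finset.range ((j : ℕ) + 1),
        ((-1 : ℝ) ^ ((j : ℕ) - k) * (Nat.choose ((K-1) - k) ((j : ℕ) - k))) • B k :=
  stmt11_general n K P H B hB
end

section
/- For every rank tuple r, the set 𝒞(r) is compact and path-connected. -/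
open Matrix

/-!
`𝒞(r)` is the image of `SO(n)^(K-1) × SO(n)` under the continuous map
`(Q, H) ↦ 𝒜(Q_i D_{r_i} Q_iᵀ, H)`, where `D_r = diag(1, …, 1, 0, …, 0)` has `r` ones: by the
spectral theorem every symmetric projector of rank `r` is `Q D_r Qᵀ` with `Q` orthogonal, and
flipping the sign of one column of `Q` makes `det Q = 1` without changing `Q D_r Qᵀ`.
So it suffices that `SO(n)` is compact and path-connected. It is compact as a closed set of
matrices with entries in `[-1, 1]`. It is path-connected because plane rotations, each joined to
`1` inside `SO(n)`, bring the columns of any `Q ∈ SO(n)` to the standard basis one at a time; once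
the first `n - 1` columns are standard, orthogonality and `det Q = 1` force `Q = 1`.
-/

theorem JoinedIn.mul_right_of_one {M : Type*} [Monoid M] [TopologicalSpace M] [ContinuousMul M]
    {S : Submonoid M} {a b : M} (ha : JoinedIn S 1 a) (hb : b ∈ S) : JoinedIn S b (a * b) := by
  simpa using (ha.map (continuous_mul_const b)).mono (V := (S : Set M))
    (Set.image_subset_iff.2 fun x hx => S.mul_mem hx hb)

theorem Equiv.Perm.exists_forall_iff_of_card_eq {α : Type*} [Fintype α] {p q : α → Prop}
    [DecidablePred p] [DecidablePred q] (h : Fintype.card {a // p a} = Fintype.card {a // q a}) :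
    ∃ σ : Equiv.Perm α, ∀ a, q (σ a) ↔ p a := by
  have hc : Fintype.card {a // ¬p a} = Fintype.card {a // ¬q a} := by
    simp only [Fintype.card_subtype_compl, h]
  refine ⟨Equiv.subtypeCongr (Fintype.equivOfCardEq h) (Fintype.equivOfCardEq hc), fun a => ?_⟩
  by_cases ha : p a
  · simpa [Equiv.subtypeCongr, ha] using (Fintype.equivOfCardEq h ⟨a, ha⟩).2
  · simpa [Equiv.subtypeCongr, ha] using (Fintype.equivOfCardEq hc ⟨a, ha⟩).2

namespace Matrix

section Compact

variable {𝕜 ι : Type*} [RCLike 𝕜] [Fintype ι] [DecidableEq ι]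

theorem isCompact_unitaryGroup : IsCompact (unitaryGroup ι 𝕜 : Set (Matrix ι ι 𝕜)) := by
  have hclosed : IsClosed (unitaryGroup ι 𝕜 : Set (Matrix ι ι 𝕜)) := by
    have : (unitaryGroup ι 𝕜 : Set (Matrix ι ι 𝕜)) = {A | star A * A = 1} := by
      ext A; exact mem_unitaryGroup_iff'
    rw [this]
    exact isClosed_eq (continuous_star.mul continuous_id) continuous_const
  refine (isCompact_univ_pi fun _ => isCompact_univ_pi fun _ =>
    ProperSpace.isCompact_closedBall (0 : 𝕜) 1).of_isClosed_subset hclosed ?_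
  intro U hU i _ j _
  simpa using entry_norm_bound_of_unitary hU i j

theorem isCompact_specialUnitaryGroup :
    IsCompact (specialUnitaryGroup ι 𝕜 : Set (Matrix ι ι 𝕜)) := by
  have : (specialUnitaryGroup ι 𝕜 : Set (Matrix ι ι 𝕜)) =
      (unitaryGroup ι 𝕜 : Set (Matrix ι ι 𝕜)) ∩ {A | A.det = 1} := by
    ext A; exact mem_specialUnitaryGroup_iff
  rw [this]
  exact isCompact_unitaryGroup.inter_right (isClosed_eq continuous_id.matrix_det continuous_const)

end Compact

section Orthogonal

variable {ι : Type*} [Fintype ι] [DecidableEq ι]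

theorem mulVec_dotProduct_mulVec_of_mem_orthogonalGroup {Q : Matrix ι ι ℝ}
    (hQ : Q ∈ orthogonalGroup ι ℝ) (x y : ι → ℝ) : (Q *ᵥ x) ⬝ᵥ (Q *ᵥ y) = x ⬝ᵥ y := by
  rw [← vecMul_transpose, dotProduct_mulVec, vecMul_vecMul, (mem_orthogonalGroup_iff' ..).1 hQ,
    vecMul_one]

theorem det_eq_one_or_neg_one_of_mem_orthogonalGroup {Q : Matrix ι ι ℝ}
    (hQ : Q ∈ orthogonalGroup ι ℝ) : Q.det = 1 ∨ Q.det = -1 :=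
  mul_self_eq_one_iff.1 (by simpa using congrArg det ((mem_orthogonalGroup_iff' ..).1 hQ))

theorem rank_conj_of_mem_orthogonalGroup {Q : Matrix ι ι ℝ} (hQ : Q ∈ orthogonalGroup ι ℝ)
    (P : Matrix ι ι ℝ) : (Q * P * Qᵀ).rank = P.rank := by
  have hdet : IsUnit Q.det := UnitaryGroup.det_isUnit ⟨Q, hQ⟩
  rw [rank_mul_eq_left_of_isUnit_det _ _ (by rwa [det_transpose]),
    rank_mul_eq_right_of_isUnit_det _ _ hdet]

theorem submatrix_id_mem_orthogonalGroup {U : Matrix ι ι ℝ} (hU : U ∈ orthogonalGroup ι ℝ)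
    (σ : Equiv.Perm ι) : U.submatrix id σ ∈ orthogonalGroup ι ℝ := by
  rw [mem_orthogonalGroup_iff', transpose_submatrix]
  exact (submatrix_mul_equiv Uᵀ U σ (Equiv.refl _) σ).trans
    (by rw [(mem_orthogonalGroup_iff' ..).1 hU, submatrix_one_equiv])

theorem submatrix_id_mul_diagonal_mul_transpose (U : Matrix ι ι ℝ) (d : ι → ℝ)
    (σ : Equiv.Perm ι) :
    U.submatrix id σ * diagonal (d ∘ σ) * (U.submatrix id σ)ᵀ = U * diagonal d * Uᵀ := by
  rw [← submatrix_diagonal_equiv, transpose_submatrix, submatrix_mul_equiv, submatrix_mul_equiv,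
    submatrix_id_id]

theorem exists_mem_specialOrthogonalGroup_conj_diagonal {Q : Matrix ι ι ℝ}
    (hQ : Q ∈ orthogonalGroup ι ℝ) (d : ι → ℝ) :
    ∃ W ∈ specialOrthogonalGroup ι ℝ, W * diagonal d * Wᵀ = Q * diagonal d * Qᵀ := by
  rcases det_eq_one_or_neg_one_of_mem_orthogonalGroup hQ with h | h
  · exact ⟨Q, mem_specialOrthogonalGroup_iff.2 ⟨hQ, h⟩, rfl⟩
  obtain ⟨i₀⟩ : Nonempty ι := by
    by_contra hι
    rw [not_nonempty_iff] at hι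
    norm_num [det_isEmpty] at h
  set g : ι → ℝ := Function.update 1 i₀ (-1)
  have hg : ∀ i, g i * g i = 1 := fun i => by by_cases hi : i = i₀ <;> simp [g, hi]
  have hgdg : diagonal g * diagonal d * diagonal g = diagonal d := by
    rw [diagonal_mul_diagonal, diagonal_mul_diagonal]
    congr 1; ext i
    linear_combination d i * hg i
  have hG : diagonal g ∈ orthogonalGroup ι ℝ := by
    simp [mem_orthogonalGroup_iff', diagonal_mul_diagonal, hg]
  refine ⟨Q * diagonal g, mem_specialOrthogonalGroup_iff.2 ⟨mul_mem hQ hG, ?_⟩, ?_⟩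
  · rw [det_mul, h, det_diagonal, Finset.prod_update_of_mem (Finset.mem_univ _)]
    simp
  · calc Q * diagonal g * diagonal d * (Q * diagonal g)ᵀ
        = Q * (diagonal g * diagonal d * diagonal g) * Qᵀ := by
          simp only [transpose_mul, diagonal_transpose, Matrix.mul_assoc]
      _ = Q * diagonal d * Qᵀ := by rw [hgdg]

theorem IsHermitian.eigenvalues_eq_zero_or_eq_one {P : Matrix ι ι ℝ} (hP : P.IsHermitian)
    (hPP : P * P = P) (i : ι) : hP.eigenvalues i = 0 ∨ hP.eigenvalues i = 1 := by
  have hD : diagonal hP.eigenvalues * diagonal hP.eigenvalues = diagonal hP.eigenvalues := by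
    have := hP.conjStarAlgAut_star_eigenvectorUnitary
    simp only [RCLike.ofReal_real_eq_id, Function.id_comp] at this
    rw [← this, ← map_mul, hPP]
  have := congrFun (congrFun hD i) i
  simp only [diagonal_mul_diagonal, diagonal_apply_eq] at this
  rcases mul_eq_zero.1 (show hP.eigenvalues i * (hP.eigenvalues i - 1) = 0 by linarith) with h | h
  · exact Or.inl h
  · exact Or.inr (by linarith)

end Orthogonal

section PlaneRotation

variable {ι : Type*} [DecidableEq ι]

/-- The rotation by `θ` in the plane spanned by orthonormal vectors `e` and `w`. -/
noncomputable def planeRotation (e w : ι → ℝ) (θ : ℝ) : Matrix ι ι ℝ :=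
  1 + (Real.cos θ - 1) • (vecMulVec e e + vecMulVec w w) +
    Real.sin θ • (vecMulVec e w - vecMulVec w e)

@[simp]
theorem planeRotation_zero (e w : ι → ℝ) : planeRotation e w 0 = 1 := by simp [planeRotation]

@[fun_prop]
theorem continuous_planeRotation (e w : ι → ℝ) : Continuous (planeRotation e w) := by
  unfold planeRotation; fun_prop

variable [Fintype ι] {e w : ι → ℝ}

theorem planeRotation_mulVec_of_dotProduct_eq_zero (θ : ℝ) {x : ι → ℝ} (hex : e ⬝ᵥ x = 0)
    (hwx : w ⬝ᵥ x = 0) : planeRotation e w θ *ᵥ x = x := by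
  simp [planeRotation, add_mulVec, sub_mulVec, smul_mulVec, vecMulVec_mulVec, hex, hwx]

section Orthonormal

variable (he : e ⬝ᵥ e = 1) (hw : w ⬝ᵥ w = 1) (hew : e ⬝ᵥ w = 0)
include he hw hew

theorem planeRotation_mulVec_cos_smul_add_sin_smul (θ : ℝ) :
    planeRotation e w θ *ᵥ (Real.cos θ • e + Real.sin θ • w) = e := by
  have hwe : w ⬝ᵥ e = 0 := by rwa [dotProduct_comm]
  simp only [planeRotation, add_mulVec, smul_mulVec, sub_mulVec, one_mulVec, vecMulVec_mulVec,
    op_smul_eq_smul, mulVec_add, mulVec_smul, he, hw, hew, hwe]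
  match_scalars <;> nlinarith [Real.sin_sq_add_cos_sq θ]

theorem planeRotation_transpose_mul_self (θ : ℝ) :
    (planeRotation e w θ)ᵀ * planeRotation e w θ = 1 := by
  have hwe : w ⬝ᵥ e = 0 := by rwa [dotProduct_comm]
  have expand : (planeRotation e w θ)ᵀ * planeRotation e w θ = 1 +
      ((Real.cos θ - 1) ^ 2 + 2 * (Real.cos θ - 1) + Real.sin θ ^ 2) •
        (vecMulVec e e + vecMulVec w w) := by
    simp only [planeRotation, transpose_add, transpose_smul, transpose_one, transpose_sub,
      transpose_vecMulVec, Matrix.mul_add, Matrix.add_mul, Matrix.smul_mul, Matrix.mul_smul,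
      Matrix.mul_one, Matrix.one_mul, Matrix.sub_mul, Matrix.mul_sub, vecMulVec_mul_vecMulVec,
      he, hw, hew, hwe, one_smul, zero_smul, vecMulVec_zero]
    module
  rw [expand, show (Real.cos θ - 1) ^ 2 + 2 * (Real.cos θ - 1) + Real.sin θ ^ 2 = 0 by
    nlinarith [Real.sin_sq_add_cos_sq θ], zero_smul, add_zero]

theorem det_planeRotation (θ : ℝ) : (planeRotation e w θ).det = 1 := by
  have hsq : ∀ t, (planeRotation e w t).det * (planeRotation e w t).det = 1 := fun t => by
    simpa using congrArg det (planeRotation_transpose_mul_self he hw hew t)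
  rcases mul_self_eq_one_iff.mp (hsq θ) with h | h
  · exact h
  -- the determinant is continuous in the angle, equals `1` at `0`, and never vanishes
  obtain ⟨t, ht⟩ : ∃ t, (planeRotation e w t).det = 0 :=
    intermediate_value_univ θ 0 (continuous_planeRotation e w).matrix_det (by simp [h])
  simpa [ht] using hsq t

theorem planeRotation_mem_specialOrthogonalGroup (θ : ℝ) :
    planeRotation e w θ ∈ specialOrthogonalGroup ι ℝ :=
  mem_specialOrthogonalGroup_iff.2
    ⟨(mem_orthogonalGroup_iff' ..).2 (planeRotation_transpose_mul_self he hw hew θ),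
      det_planeRotation he hw hew θ⟩

theorem joinedIn_one_planeRotation (θ : ℝ) :
    JoinedIn (specialOrthogonalGroup ι ℝ) 1 (planeRotation e w θ) :=
  JoinedIn.ofLine (f := fun t => planeRotation e w (t * θ)) (by fun_prop) (by simp) (by simp)
    (Set.image_subset_iff.2 fun _ _ => planeRotation_mem_specialOrthogonalGroup he hw hew _)

end Orthonormal

/-- The auxiliary unit vector `w₀ ⟂ e` spans the rotation plane when `v = ± e`. -/
theorem exists_planeRotation_mulVec_eq (he : e ⬝ᵥ e = 1) {v w₀ : ι → ℝ} (hv : v ⬝ᵥ v = 1)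
    (hw₀ : w₀ ⬝ᵥ w₀ = 1) (hew₀ : e ⬝ᵥ w₀ = 0) :
    ∃ w θ, w ⬝ᵥ w = 1 ∧ e ⬝ᵥ w = 0 ∧
      (∀ x, e ⬝ᵥ x = 0 → v ⬝ᵥ x = 0 → w₀ ⬝ᵥ x = 0 → w ⬝ᵥ x = 0) ∧
      planeRotation e w θ *ᵥ v = e := by
  set c := e ⬝ᵥ v
  set u := v - c • e with hu
  have heu : e ⬝ᵥ u = 0 := by simp [u, c, he]
  have huu : u ⬝ᵥ u = 1 - c ^ 2 := by
    simp only [u, sub_dotProduct, dotProduct_sub, smul_dotProduct, dotProduct_smul, hv, he,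
      dotProduct_comm v e, smul_eq_mul]
    ring
  have hu₀ : 0 ≤ u ⬝ᵥ u := Finset.sum_nonneg fun i _ => mul_self_nonneg (u i)
  set s := √(u ⬝ᵥ u)
  have hcos : Real.cos (Real.arccos c) = c := Real.cos_arccos (by nlinarith) (by nlinarith)
  have hsin : Real.sin (Real.arccos c) = s := by rw [Real.sin_arccos, ← huu]
  suffices ∃ w, w ⬝ᵥ w = 1 ∧ e ⬝ᵥ w = 0 ∧
      (∀ x, e ⬝ᵥ x = 0 → v ⬝ᵥ x = 0 → w₀ ⬝ᵥ x = 0 → w ⬝ᵥ x = 0) ∧ v = c • e + s • w by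
    obtain ⟨w, hw, hew, hperp, hvw⟩ := this
    refine ⟨w, Real.arccos c, hw, hew, hperp, ?_⟩
    have := planeRotation_mulVec_cos_smul_add_sin_smul he hw hew (Real.arccos c)
    rwa [hcos, hsin, ← hvw] at this
  by_cases hs : s = 0
  · refine ⟨w₀, hw₀, hew₀, fun x _ _ h => h, ?_⟩
    have : u = 0 := dotProduct_self_eq_zero.1 (le_antisymm (Real.sqrt_eq_zero'.1 hs) hu₀)
    rw [hs, zero_smul, add_zero, ← sub_eq_zero, ← this]
  · have hss : s * s = u ⬝ᵥ u := Real.mul_self_sqrt hu₀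
    refine ⟨s⁻¹ • u, ?_, by simp [heu], fun x hex hvx _ => ?_, ?_⟩
    · simp only [smul_dotProduct, dotProduct_smul, smul_eq_mul, ← hss]
      field_simp
    · simp [u, hex, hvx]
    · rw [smul_smul, mul_inv_cancel₀ hs, one_smul, hu]
      abel

end PlaneRotation

section SpecialOrthogonalFin

variable {n : ℕ}

def FixesFirst (k : ℕ) (Q : Matrix (Fin n) (Fin n) ℝ) : Prop :=
  ∀ i : Fin n, (i : ℕ) < k → Q *ᵥ Pi.single i 1 = Pi.single i 1

theorem FixesFirst.exists_joinedIn_succ {k : ℕ} (hk : k + 1 < n) {Q : Matrix (Fin n) (Fin n) ℝ}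
    (hQ : Q ∈ specialOrthogonalGroup (Fin n) ℝ) (hfix : FixesFirst k Q) :
    ∃ Q', JoinedIn (specialOrthogonalGroup (Fin n) ℝ) Q Q' ∧ FixesFirst (k + 1) Q' := by
  have hdot := mulVec_dotProduct_mulVec_of_mem_orthogonalGroup
    (mem_specialOrthogonalGroup_iff.1 hQ).1
  have hsingle (i j : Fin n) :
      (Pi.single i 1 : Fin n → ℝ) ⬝ᵥ Pi.single j 1 = if i = j then 1 else 0 := by
    rw [single_one_dotProduct, Pi.single_apply]
  set e : Fin n → ℝ := Pi.single ⟨k, by omega⟩ 1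
  set w₀ : Fin n → ℝ := Pi.single ⟨k + 1, hk⟩ 1
  have he : e ⬝ᵥ e = 1 := by simp [e, hsingle]
  obtain ⟨w, θ, hw, hew, hperp, hrot⟩ :=
    exists_planeRotation_mulVec_eq (v := Q *ᵥ e) (w₀ := w₀) he (by rw [hdot, he])
      (by simp [w₀, hsingle]) (by simp [e, w₀, hsingle, Fin.ext_iff])
  refine ⟨planeRotation e w θ * Q, (joinedIn_one_planeRotation he hw hew θ).mul_right_of_one hQ,
    fun i hi => ?_⟩
  rw [← mulVec_mulVec]
  rcases Nat.lt_succ_iff_lt_or_eq.1 hi with hi | hi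
  · have hei : e ⬝ᵥ Pi.single i 1 = 0 := by simp [e, hsingle, Fin.ext_iff]; omega
    rw [hfix i hi]
    refine planeRotation_mulVec_of_dotProduct_eq_zero θ hei (hperp _ hei ?_ ?_)
    · rw [← hfix i hi, hdot, hei]
    · simp [w₀, hsingle, Fin.ext_iff]; omega
  · rwa [show i = ⟨k, by omega⟩ from Fin.ext hi]

theorem exists_joinedIn_fixesFirst {Q : Matrix (Fin n) (Fin n) ℝ}
    (hQ : Q ∈ specialOrthogonalGroup (Fin n) ℝ) {k : ℕ} (hk : k ≤ n - 1) :
    ∃ Q', JoinedIn (specialOrthogonalGroup (Fin n) ℝ) Q Q' ∧ FixesFirst k Q' := by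
  induction k with
  | zero => exact ⟨Q, JoinedIn.refl hQ, fun i hi => absurd hi (Nat.not_lt_zero _)⟩
  | succ k ih =>
    obtain ⟨Q₁, hQQ₁, hfix₁⟩ := ih (by omega)
    obtain ⟨Q₂, hQ₁Q₂, hfix₂⟩ := hfix₁.exists_joinedIn_succ (by omega) hQQ₁.mem.2
    exact ⟨Q₂, hQQ₁.trans hQ₁Q₂, hfix₂⟩

/-- Orthogonality forces the last column to be `± e_last`, and the determinant fixes the sign. -/
theorem FixesFirst.eq_one {Q : Matrix (Fin n) (Fin n) ℝ}
    (hQ : Q ∈ specialOrthogonalGroup (Fin n) ℝ) (hfix : FixesFirst (n - 1) Q) : Q = 1 := by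
  obtain ⟨hQo, hdet⟩ := mem_specialOrthogonalGroup_iff.1 hQ
  have hcol : ∀ i j : Fin n, (i : ℕ) < n - 1 → Q j i = (1 : Matrix (Fin n) (Fin n) ℝ) j i :=
    fun i j hi => by
      simpa [mulVec_single_one, Pi.single_apply, one_apply] using congrFun (hfix i hi) j
  ext j l
  by_cases hl : (l : ℕ) < n - 1
  · exact hcol l j hl
  have hlt : ∀ i, i ≠ l → (i : ℕ) < n - 1 := fun i hi => by
    have := Fin.val_ne_of_ne hi; omega
  have hlast : ∀ j, j ≠ l → Q j l = 0 := fun j hj => by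
    have := congrFun (congrFun ((mem_orthogonalGroup_iff' ..).1 hQo) j) l
    simpa [mul_apply, hcol j _ (hlt j hj), one_apply, hj] using this
  have hdiag : Q = diagonal fun i => Q i i := by
    ext a b
    by_cases hab : a = b
    · simp [hab]
    · by_cases hb : b = l
      · simp [hb ▸ hlast a (hb ▸ hab), hab]
      · simp [hcol b a (hlt b hb), hab]
  have hll : Q l l = 1 := by
    rw [← hdet, hdiag, det_diagonal, Finset.prod_eq_single l
      (fun i _ hi => by simpa using hcol i i (hlt i hi)) (by simp)]
    simp
  by_cases hj : j = l
  · subst hj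
    simp [hll]
  · simp [hlast j hj, hj]

theorem isPathConnected_specialOrthogonalGroup (n : ℕ) :
    IsPathConnected (specialOrthogonalGroup (Fin n) ℝ : Set (Matrix (Fin n) (Fin n) ℝ)) := by
  refine ⟨1, one_mem _, fun Q hQ => ?_⟩
  obtain ⟨Q', hQQ', hfix⟩ := exists_joinedIn_fixesFirst hQ le_rfl
  rw [← hfix.eq_one hQQ'.mem.2]
  exact hQQ'.symm

end SpecialOrthogonalFin

end Matrix

section Projector

variable {n : ℕ}

def stdProjector (n r : ℕ) : Matrix (Fin n) (Fin n) ℝ :=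
  diagonal fun i => if (i : ℕ) < r then 1 else 0

theorem isSymProj_stdProjector (n r : ℕ) : IsSymProj n (stdProjector n r) := by
  refine ⟨?_, diagonal_transpose _⟩
  rw [stdProjector, diagonal_mul_diagonal]
  congr 1; ext i
  split_ifs <;> norm_num

theorem rank_stdProjector {r : ℕ} (hr : r ≤ n) : (stdProjector n r).rank = r := by
  rw [stdProjector, rank_diagonal]
  refine (Fintype.card_congr ?_).trans (Fintype.card_fin_lt_of_le hr)
  exact Equiv.subtypeEquivRight fun i => by split_ifs <;> simp [*]

theorem IsSymProj.conj {P Q : Matrix (Fin n) (Fin n) ℝ} (hP : IsSymProj n P)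
    (hQ : Q ∈ orthogonalGroup (Fin n) ℝ) : IsSymProj n (Q * P * Qᵀ) := by
  refine ⟨?_, by rw [transpose_mul, transpose_mul, transpose_transpose, hP.2, Matrix.mul_assoc]⟩
  calc Q * P * Qᵀ * (Q * P * Qᵀ) = Q * P * (Qᵀ * Q) * P * Qᵀ := by simp only [Matrix.mul_assoc]
    _ = Q * P * Qᵀ := by
      rw [(mem_orthogonalGroup_iff' ..).1 hQ, Matrix.mul_one, Matrix.mul_assoc Q P P, hP.1]

theorem IsSymProj.exists_mem_orthogonalGroup_eq_conj {P : Matrix (Fin n) (Fin n) ℝ}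
    (hP : IsSymProj n P) :
    ∃ Q ∈ orthogonalGroup (Fin n) ℝ, P = Q * stdProjector n P.rank * Qᵀ := by
  have hH : P.IsHermitian := by
    simpa [IsHermitian, conjTranspose_eq_transpose_of_trivial] using hP.2
  set U : Matrix (Fin n) (Fin n) ℝ := ↑hH.eigenvectorUnitary
  set μ := hH.eigenvalues
  have hspec : P = U * diagonal μ * Uᵀ := by
    simpa [U, μ, star_eq_conjTranspose, conjTranspose_eq_transpose_of_trivial] using
      hH.spectral_theorem
  obtain ⟨σ, hσ⟩ := Equiv.Perm.exists_forall_iff_of_card_eq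
    (p := fun i : Fin n => (i : ℕ) < P.rank) (q := fun i => μ i ≠ 0)
    (by rw [Fintype.card_fin_lt_of_le (rank_le_width P), hH.rank_eq_card_non_zero_eigs])
  have hμσ : μ ∘ σ = fun i : Fin n => if (i : ℕ) < P.rank then (1 : ℝ) else 0 := by
    ext i
    rcases hH.eigenvalues_eq_zero_or_eq_one hP.1 (σ i) with h | h
    · simp [μ, h, not_lt.1 fun hi => (hσ i).2 hi h]
    · simp [μ, h, (hσ i).1 (by simp [μ, h])]
  refine ⟨U.submatrix id σ, submatrix_id_mem_orthogonalGroup hH.eigenvectorUnitary.2 σ, ?_⟩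
  rw [stdProjector, ← hμσ, submatrix_id_mul_diagonal_mul_transpose, hspec]

theorem setOf_isSymProj_rank_eq_image {r : ℕ} (hr : r ≤ n) :
    {P | IsSymProj n P ∧ P.rank = r} =
      (fun Q => Q * stdProjector n r * Qᵀ) '' specialOrthogonalGroup (Fin n) ℝ := by
  ext P
  constructor
  · rintro ⟨hP, rfl⟩
    obtain ⟨Q, hQ, hPQ⟩ := hP.exists_mem_orthogonalGroup_eq_conj
    obtain ⟨W, hW, hWQ⟩ := exists_mem_specialOrthogonalGroup_conj_diagonal hQ _
    exact ⟨W, hW, hWQ.trans hPQ.symm⟩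
  · rintro ⟨Q, hQ, rfl⟩
    have hQ' := (mem_specialOrthogonalGroup_iff.1 hQ).1
    exact ⟨(isSymProj_stdProjector n r).conj hQ',
      (rank_conj_of_mem_orthogonalGroup hQ' _).trans (rank_stdProjector hr)⟩

end Projector

theorem continuous_Aker (n K : ℕ) :
    Continuous fun p : (Fin (K-1) → Matrix (Fin n) (Fin n) ℝ) × Matrix (Fin n) (Fin n) ℝ =>
      Aker n K p.1 p.2 := by
  refine continuous_pi fun j => continuous_finsetSum _ fun δ _ =>
    continuous_snd.mul (continuous_list_prod _ fun i _ => ?_)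
  split <;> fun_prop

theorem SOCK_eq_image (n K : ℕ) (r : Fin (K - 1) → ℕ) :
    SOCK n K r = (fun p => Aker n K p.1 p.2) ''
      (Set.univ.pi (fun i => {P | IsSymProj n P ∧ P.rank = r i}) ×ˢ
        (specialOrthogonalGroup (Fin n) ℝ : Set (Matrix (Fin n) (Fin n) ℝ))) := by
  ext A
  simp [SOCK, mem_specialOrthogonalGroup_iff, mem_orthogonalGroup_iff', eq_comm, and_assoc]

theorem stmt12_general (n K : ℕ) (r : Fin (K-1) → ℕ) (hr : ∀ i, r i ≤ n) :
    IsCompact (SOCK n K r) ∧ IsPathConnected (SOCK n K r) := by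
  simp_rw [SOCK_eq_image, setOf_isSymProj_rank_eq_image (hr _)]
  have hconj (i) : Continuous fun Q : Matrix (Fin n) (Fin n) ℝ => Q * stdProjector n (r i) * Qᵀ :=
    by fun_prop
  exact ⟨((isCompact_univ_pi fun i => isCompact_specialUnitaryGroup.image (hconj i)).prod
      isCompact_specialUnitaryGroup).image (continuous_Aker n K),
    ((IsPathConnected.pi fun i => (isPathConnected_specialOrthogonalGroup n).image (hconj i)).prod
      (isPathConnected_specialOrthogonalGroup n)).image (continuous_Aker n K)⟩

theorem stmt12 (n K : ℕ) (hn : 1 ≤ n) (hK : 2 ≤ K)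
    (r : Fin (K-1) → ℕ) (hr : ∀ i, r i ≤ n) :
    IsCompact (SOCK n K r) ∧ IsPathConnected (SOCK n K r) :=
  stmt12_general n K r hr
end

section
/- Let n ≥ 1 and let k_1, k_2 be integers with 1 ≤ k_1 ≤ k_2 + 1. For all symmetric projectors P'_1 of rank k_1 − 1 and P'_2 of rank k_2 + 1 (both n×n real matrices), there exist symmetric projectors P_1 of rank k_1 and P_2 of rank k_2 such that P_1 + P_2 = P'_1 + P'_2, P_1·P_2 = P'_1·P'_2, and P_2·P_1 = P'_2·P'_1. -/
/-!
Dimension count: `ker P₁'` has dimension `n - k₁ + 1` and `range P₂'` has dimension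
`k₂ + 1 ≥ k₁`, so they share a unit vector `v`. The rank-one projector `W = v vᵀ` is orthogonal
to `P₁'` and lies under `P₂'`, so moving it across, `P₁ = P₁' + W` and `P₂ = P₂' - W`, keeps both
projectors symmetric and idempotent, changes the ranks by one (rank equals trace for
idempotents), and leaves the sum and both products unchanged.
-/

open Matrix

section Ring

variable {R : Type*} [Ring R] {p q w : R}

theorem add_mul_sub_eq_mul (hw : IsIdempotentElem w) (hpw : p * w = 0) (hwq : w * q = w) :
    (p + w) * (q - w) = p * q := by
  rw [add_mul, mul_sub, mul_sub, hpw, hwq, hw.eq, sub_self, sub_zero, add_zero]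

theorem sub_mul_add_eq_mul (hw : IsIdempotentElem w) (hqw : q * w = w) (hwp : w * p = 0) :
    (q - w) * (p + w) = q * p := by
  rw [sub_mul, mul_add, mul_add, hqw, hwp, hw.eq, zero_add, add_sub_cancel_right]

end Ring

namespace Matrix

variable {ι K : Type*} [Fintype ι]

theorem IsIdempotentElem.rank_cast_eq_trace [DecidableEq ι] [Field K] {A : Matrix ι ι K}
    (hA : IsIdempotentElem A) : (A.rank : K) = A.trace := by
  have hA' : IsIdempotentElem (toLin' A) := hA.map toLinAlgEquiv'
  rw [← trace_toLin'_eq, (LinearMap.IsIdempotentElem.isProj_range _ hA').trace]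
  rfl

theorem rank_add_of_isIdempotentElem [DecidableEq ι] [Field K] [CharZero K]
    {A B : Matrix ι ι K} (hA : IsIdempotentElem A) (hB : IsIdempotentElem B)
    (hAB : IsIdempotentElem (A + B)) : (A + B).rank = A.rank + B.rank := by
  apply Nat.cast_injective (R := K)
  rw [Nat.cast_add, hA.rank_cast_eq_trace, hB.rank_cast_eq_trace, hAB.rank_cast_eq_trace,
    trace_add]

theorem exists_ne_zero_mulVec_eq_zero_of_rank_lt [Field K] {A B : Matrix ι ι K}
    (hB : IsIdempotentElem B) (hAB : A.rank < B.rank) :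
    ∃ v, v ≠ 0 ∧ A *ᵥ v = 0 ∧ B *ᵥ v = v := by
  have hnullity := A.mulVecLin.finrank_range_add_finrank_ker
  rw [Module.finrank_fintype_fun_eq_card] at hnullity
  have hmeet : ¬Disjoint (LinearMap.ker A.mulVecLin) (LinearMap.range B.mulVecLin) := by
    intro hdisj
    have hle := Submodule.finrank_add_finrank_le_of_disjoint hdisj
    rw [Module.finrank_fintype_fun_eq_card] at hle
    unfold Matrix.rank at hAB
    omega
  simp only [Submodule.disjoint_def, not_forall] at hmeet
  obtain ⟨_, hvA, ⟨w, rfl⟩, hv⟩ := hmeet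
  refine ⟨B *ᵥ w, hv, hvA, ?_⟩
  rw [mulVec_mulVec, hB.eq]

section LineProj

variable [Field K] {v : ι → K}

def lineProj (v : ι → K) : Matrix ι ι K :=
  (v ⬝ᵥ v)⁻¹ • vecMulVec v v

theorem transpose_lineProj : (lineProj v)ᵀ = lineProj v := by
  rw [lineProj, transpose_smul, transpose_vecMulVec]

theorem mul_lineProj_of_mulVec_eq_smul {M : Matrix ι ι K} {c : K} (h : M *ᵥ v = c • v) :
    M * lineProj v = c • lineProj v := by
  rw [lineProj, Matrix.mul_smul, mul_vecMulVec, h, smul_vecMulVec, smul_comm]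

theorem lineProj_mul_of_mulVec_eq_smul {M : Matrix ι ι K} {c : K} (hM : Mᵀ = M)
    (h : M *ᵥ v = c • v) : lineProj v * M = c • lineProj v := by
  calc lineProj v * M = (M * lineProj v)ᵀ := by rw [transpose_mul, hM, transpose_lineProj]
    _ = c • lineProj v := by
      rw [mul_lineProj_of_mulVec_eq_smul h, transpose_smul, transpose_lineProj]

variable [LinearOrder K] [IsStrictOrderedRing K]

theorem lineProj_mulVec_self (hv : v ≠ 0) : lineProj v *ᵥ v = v := by
  rw [lineProj, smul_mulVec, vecMulVec_mulVec, op_smul_eq_smul, smul_smul,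
    inv_mul_cancel₀ (dotProduct_self_eq_zero.not.mpr hv), one_smul]

theorem isIdempotentElem_lineProj (hv : v ≠ 0) : IsIdempotentElem (lineProj v) := by
  have h := mul_lineProj_of_mulVec_eq_smul (c := (1 : K))
    (by rw [one_smul, lineProj_mulVec_self hv])
  rwa [one_smul] at h

theorem rank_lineProj [DecidableEq ι] (hv : v ≠ 0) : (lineProj v).rank = 1 := by
  apply Nat.cast_injective (R := K)
  rw [(isIdempotentElem_lineProj hv).rank_cast_eq_trace, lineProj, trace_smul, Nat.cast_one,
    trace_vecMulVec, smul_eq_mul, inv_mul_cancel₀ (dotProduct_self_eq_zero.not.mpr hv)]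

end LineProj

end Matrix

theorem stmt13_general (n : ℕ) (k₁ k₂ : ℕ) (hk₁ : 1 ≤ k₁) (hk : k₁ ≤ k₂ + 1)
    (P₁' P₂' : Matrix (Fin n) (Fin n) ℝ)
    (h1 : IsSymProj n P₁') (h1r : P₁'.rank = k₁ - 1)
    (h2 : IsSymProj n P₂') (h2r : P₂'.rank = k₂ + 1) :
    ∃ P₁ P₂ : Matrix (Fin n) (Fin n) ℝ,
      IsSymProj n P₁ ∧ P₁.rank = k₁ ∧ IsSymProj n P₂ ∧ P₂.rank = k₂ ∧
      P₁ + P₂ = P₁' + P₂' ∧ P₁ * P₂ = P₁' * P₂' ∧ P₂ * P₁ = P₂' * P₁' := by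
  obtain ⟨h1p, h1s⟩ := h1
  obtain ⟨h2p, h2s⟩ := h2
  obtain ⟨v, hv, hv1, hv2⟩ :=
    exists_ne_zero_mulVec_eq_zero_of_rank_lt h2p (by omega : P₁'.rank < P₂'.rank)
  set W := lineProj v
  have hW : IsIdempotentElem W := isIdempotentElem_lineProj hv
  have hv1' : P₁' *ᵥ v = (0 : ℝ) • v := by rw [hv1, zero_smul]
  have hv2' : P₂' *ᵥ v = (1 : ℝ) • v := by rw [hv2, one_smul]
  have h1W : P₁' * W = 0 := by rw [mul_lineProj_of_mulVec_eq_smul hv1', zero_smul]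
  have hW1 : W * P₁' = 0 := by rw [lineProj_mul_of_mulVec_eq_smul h1s hv1', zero_smul]
  have h2W : P₂' * W = W := by rw [mul_lineProj_of_mulVec_eq_smul hv2', one_smul]
  have hW2 : W * P₂' = W := by rw [lineProj_mul_of_mulVec_eq_smul h2s hv2', one_smul]
  have hP₁ : IsIdempotentElem (P₁' + W) := IsIdempotentElem.add h1p hW (by rw [h1W, hW1, add_zero])
  have hP₂ : IsIdempotentElem (P₂' - W) := hW.sub h2p hW2 h2W
  have hrank₁ := rank_add_of_isIdempotentElem h1p hW hP₁
  have hrank₂ := rank_add_of_isIdempotentElem hP₂ hW (by rwa [sub_add_cancel])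
  rw [rank_lineProj hv] at hrank₁
  rw [sub_add_cancel, rank_lineProj hv] at hrank₂
  refine ⟨P₁' + W, P₂' - W, ⟨hP₁, ?_⟩, by omega, ⟨hP₂, ?_⟩, by omega,
    add_add_sub_cancel P₁' P₂' W, add_mul_sub_eq_mul hW h1W hW2, sub_mul_add_eq_mul hW h2W hW1⟩
  · rw [transpose_add, h1s, transpose_lineProj]
  · rw [transpose_sub, h2s, transpose_lineProj]

theorem stmt13 (n : ℕ) (hn : 1 ≤ n) (k₁ k₂ : ℕ) (hk₁ : 1 ≤ k₁) (hk : k₁ ≤ k₂ + 1)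
    (P₁' P₂' : Matrix (Fin n) (Fin n) ℝ)
    (h1 : IsSymProj n P₁') (h1r : P₁'.rank = k₁ - 1)
    (h2 : IsSymProj n P₂') (h2r : P₂'.rank = k₂ + 1) :
    ∃ P₁ P₂ : Matrix (Fin n) (Fin n) ℝ,
      IsSymProj n P₁ ∧ P₁.rank = k₁ ∧ IsSymProj n P₂ ∧ P₂.rank = k₂ ∧
      P₁ + P₂ = P₁' + P₂' ∧ P₁ * P₂ = P₁' * P₂' ∧ P₂ * P₁ = P₂' * P₁' :=
  stmt13_general n k₁ k₂ hk₁ hk P₁' P₂' h1 h1r h2 h2r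
end

section
/- For n ≥ 1, the set K₂(n), viewed as a subset of the space of quadruples of n×n real matrices with its Euclidean topology, has at least 2(n+1)² connected components; that is, the set of connected components of K₂(n) has cardinality at least 2(n+1)². -/
/-!
Read `(A₁, A₂, A₃, A₄)` as the 2×2 kernel `[[A₁, A₂], [A₃, A₄]]`. Summing it along either axis
gives a 1-D orthogonal kernel `(P, Q)`, i.e. `P Qᵀ = 0` and `P Pᵀ + Q Qᵀ = 1`, and summing all
four blocks gives an orthogonal matrix. For such a pair `0 ≤ Q Qᵀ ≤ 1`, so `tr (Q Qᵀ) ≤ rank Q`,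
and likewise for `P`; since the row spaces of `P` and `Q` are orthogonal, `rank P + rank Q ≤ n`,
which forces `tr (Q Qᵀ) = rank Q`. Hence `tr ((A₂ + A₄)(A₂ + A₄)ᵀ)`, `tr ((A₃ + A₄)(A₃ + A₄)ᵀ)`
and `det (A₁ + A₂ + A₃ + A₄)` are continuous functions on `K₂(n)` with values in
`{0, …, n} × {0, …, n} × {±1}`, so they are constant on connected components, and diagonal
kernels attain all `2 (n + 1)²` values.
-/

open Matrix

def K2 (n : ℕ) : Set (Matrix (Fin n) (Fin n) ℝ × Matrix (Fin n) (Fin n) ℝ ×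
    Matrix (Fin n) (Fin n) ℝ × Matrix (Fin n) (Fin n) ℝ) :=
  {A | A.1 * A.2.2.2ᵀ = 0 ∧ A.2.1 * A.2.2.1ᵀ = 0 ∧
    A.1 * A.2.1ᵀ + A.2.2.1 * A.2.2.2ᵀ = 0 ∧
    A.1 * A.2.2.1ᵀ + A.2.1 * A.2.2.2ᵀ = 0 ∧
    A.1 * A.1ᵀ + A.2.1 * A.2.1ᵀ + A.2.2.1 * A.2.2.1ᵀ + A.2.2.2 * A.2.2.2ᵀ = 1}

theorem Continuous.apply_eq_of_connectedComponentsMk_eq {X Y : Type*} [TopologicalSpace X]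
    [TopologicalSpace Y] {f : X → Y} (hf : Continuous f) {T : Set Y} (hT : IsDiscrete T)
    (hfT : ∀ x, f x ∈ T) {x y : X}
    (hxy : ConnectedComponents.mk x = ConnectedComponents.mk y) : f x = f y :=
  isPreconnected_connectedComponent.constant_of_mapsTo hT hf.continuousOn (fun z _ ↦ hfT z)
    (ConnectedComponents.coe_eq_coe'.mp hxy) mem_connectedComponent

lemma Pi.mulSingle_mul_self_eq_one {ι M : Type*} [DecidableEq ι] [MulOneClass M] {s : M}
    (hs : s * s = 1) (i j : ι) :
    (Pi.mulSingle i s : ι → M) j * (Pi.mulSingle i s : ι → M) j = 1 := by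
  by_cases h : j = i <;> simp [h, hs]

lemma Int.cast_units_mul_self {R : Type*} [Ring R] (u : ℤˣ) : ((u : ℤ) : R) * (u : ℤ) = 1 := by
  rw [← Int.cast_mul, ← Units.val_mul, Int.units_mul_self, Units.val_one, Int.cast_one]

namespace Matrix

variable {m : Type*} [Fintype m] [DecidableEq m]

lemma IsHermitian.eigenvalues_le_one {E : Matrix m m ℝ} (hE : E.IsHermitian)
    (h : (1 - E).PosSemidef) (i : m) : hE.eigenvalues i ≤ 1 := by
  have hv : star ⇑(hE.eigenvectorBasis i) ⬝ᵥ ⇑(hE.eigenvectorBasis i) = 1 := by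
    rw [dotProduct_comm, ← EuclideanSpace.inner_eq_star_dotProduct, real_inner_self_eq_norm_sq,
      hE.eigenvectorBasis.orthonormal.1 i, one_pow]
  have := h.re_dotProduct_nonneg (hE.eigenvectorBasis i)
  rw [sub_mulVec, one_mulVec, dotProduct_sub, map_sub, ← hE.eigenvalues_eq, hv] at this
  simpa using this

lemma PosSemidef.trace_le_rank {E : Matrix m m ℝ} (hE : E.PosSemidef)
    (h : (1 - E).PosSemidef) : E.trace ≤ E.rank := by
  rw [hE.isHermitian.trace_eq_sum_eigenvalues, hE.isHermitian.rank_eq_card_non_zero_eigs,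
    Fintype.card_subtype, ← Finset.sum_filter_ne_zero]
  refine (Finset.sum_le_sum fun i _ ↦ hE.isHermitian.eigenvalues_le_one h i).trans_eq ?_
  simp

lemma trace_mul_transpose_eq_rank {P Q : Matrix m m ℝ} (hPQ : P * Qᵀ = 0)
    (h : P * Pᵀ + Q * Qᵀ = 1) : (Q * Qᵀ).trace = Q.rank := by
  have hP : (P * Pᵀ).PosSemidef := by simpa using posSemidef_self_mul_conjTranspose P
  have hQ : (Q * Qᵀ).PosSemidef := by simpa using posSemidef_self_mul_conjTranspose Q
  have hPle := hP.trace_le_rank (by rwa [← h, add_sub_cancel_left])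
  have hQle := hQ.trace_le_rank (by rwa [← h, add_sub_cancel_right])
  have hsum : (P * Pᵀ).trace + (Q * Qᵀ).trace = Fintype.card m := by
    rw [← trace_add, h, trace_one]
  have hrank : P.rank + Q.rank ≤ Fintype.card m := by
    simpa using rank_add_rank_le_card_of_mul_eq_zero hPQ
  rw [rank_self_mul_transpose] at hPle hQle
  have : (P.rank : ℝ) + Q.rank ≤ Fintype.card m := by exact_mod_cast hrank
  linarith

lemma add_mul_transpose_add_eq_one {P Q : Matrix m m ℝ} (hPQ : P * Qᵀ = 0)
    (h : P * Pᵀ + Q * Qᵀ = 1) : (P + Q) * (P + Q)ᵀ = 1 := by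
  have hQP : Q * Pᵀ = 0 := by simpa using congrArg transpose hPQ
  linear_combination (norm := skip) h + hPQ + hQP
  simp only [transpose_add, add_mul, mul_add]; abel

lemma det_eq_one_or_neg_one_of_mul_transpose_eq_one {U : Matrix m m ℝ} (h : U * Uᵀ = 1) :
    U.det = 1 ∨ U.det = -1 :=
  mul_self_eq_one_iff.mp (by simpa using congrArg det h)

end Matrix

namespace K2

variable {n : ℕ}

section Sums

variable {A₁ A₂ A₃ A₄ : Matrix (Fin n) (Fin n) ℝ}

lemma colSums_orthogonal (hA : (A₁, A₂, A₃, A₄) ∈ K2 n) :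
    (A₁ + A₃) * (A₂ + A₄)ᵀ = 0 ∧ (A₁ + A₃) * (A₁ + A₃)ᵀ + (A₂ + A₄) * (A₂ + A₄)ᵀ = 1 := by
  obtain ⟨h₁₄, h₂₃, h₁₂, h₁₃, h⟩ := hA
  have h₃₂ : A₃ * A₂ᵀ = 0 := by simpa using congrArg transpose h₂₃
  have h₃₁ : A₃ * A₁ᵀ + A₄ * A₂ᵀ = 0 := by simpa using congrArg transpose h₁₃
  constructor
  · linear_combination (norm := skip) h₁₂ + h₁₄ + h₃₂
    simp only [transpose_add, add_mul, mul_add]; abel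
  · linear_combination (norm := skip) h + h₁₃ + h₃₁
    simp only [transpose_add, add_mul, mul_add]; abel

lemma rowSums_orthogonal (hA : (A₁, A₂, A₃, A₄) ∈ K2 n) :
    (A₁ + A₂) * (A₃ + A₄)ᵀ = 0 ∧ (A₁ + A₂) * (A₁ + A₂)ᵀ + (A₃ + A₄) * (A₃ + A₄)ᵀ = 1 := by
  obtain ⟨h₁₄, h₂₃, h₁₂, h₁₃, h⟩ := hA
  have h₂₁ : A₂ * A₁ᵀ + A₄ * A₃ᵀ = 0 := by simpa using congrArg transpose h₁₂
  constructor
  · linear_combination (norm := skip) h₁₃ + h₁₄ + h₂₃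
    simp only [transpose_add, add_mul, mul_add]; abel
  · linear_combination (norm := skip) h + h₁₂ + h₂₁
    simp only [transpose_add, add_mul, mul_add]; abel

end Sums

def invariants (A : Matrix (Fin n) (Fin n) ℝ × Matrix (Fin n) (Fin n) ℝ ×
    Matrix (Fin n) (Fin n) ℝ × Matrix (Fin n) (Fin n) ℝ) : ℝ × ℝ × ℝ :=
  (((A.2.1 + A.2.2.2) * (A.2.1 + A.2.2.2)ᵀ).trace,
    ((A.2.2.1 + A.2.2.2) * (A.2.2.1 + A.2.2.2)ᵀ).trace,
    (A.1 + A.2.1 + A.2.2.1 + A.2.2.2).det)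

lemma continuous_invariants : Continuous (invariants (n := n)) := by
  unfold invariants; fun_prop

def invariantValue (n : ℕ) (p : Fin (n + 1) × Fin (n + 1) × ℤˣ) : ℝ × ℝ × ℝ :=
  ((p.1 : ℕ), (p.2.1 : ℕ), ((p.2.2 : ℤ) : ℝ))

lemma invariantValue_injective : Function.Injective (invariantValue n) := by
  rintro ⟨i, j, u⟩ ⟨i', j', u'⟩ h
  simp only [invariantValue, Prod.mk.injEq, Nat.cast_inj, Int.cast_inj, Units.val_inj,
    Fin.val_inj] at h
  rw [h.1, h.2.1, h.2.2]

lemma invariants_mem_range {A} (hA : A ∈ K2 n) : invariants A ∈ Set.range (invariantValue n) := by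
  obtain ⟨A₁, A₂, A₃, A₄⟩ := A
  obtain ⟨hcol, hcol'⟩ := colSums_orthogonal hA
  obtain ⟨hrow, hrow'⟩ := rowSums_orthogonal hA
  have hdet := det_eq_one_or_neg_one_of_mul_transpose_eq_one
    (add_mul_transpose_add_eq_one hcol hcol')
  obtain ⟨u, hu⟩ : ∃ u : ℤˣ, (A₁ + A₃ + (A₂ + A₄)).det = (u : ℤ) := by
    rcases hdet with h | h
    · exact ⟨1, by simp [h]⟩
    · exact ⟨-1, by simp [h]⟩
  refine ⟨(⟨(A₂ + A₄).rank, Nat.lt_succ_of_le (rank_le_width _)⟩,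
    ⟨(A₃ + A₄).rank, Nat.lt_succ_of_le (rank_le_width _)⟩, u), ?_⟩
  simp only [invariantValue, invariants, trace_mul_transpose_eq_rank hcol hcol',
    trace_mul_transpose_eq_rank hrow hrow', ← hu]
  congr 3
  abel

/-- The diagonal kernel whose `k`-th entry `σ k` sits in block column `x k` and block row `y k`
of `[[A₁, A₂], [A₃, A₄]]`. -/
def diagKernel (x y σ : Fin n → ℝ) : Matrix (Fin n) (Fin n) ℝ × Matrix (Fin n) (Fin n) ℝ ×
    Matrix (Fin n) (Fin n) ℝ × Matrix (Fin n) (Fin n) ℝ :=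
  (diagonal (σ * (1 - x) * (1 - y)), diagonal (σ * x * (1 - y)),
    diagonal (σ * (1 - x) * y), diagonal (σ * x * y))

section DiagKernel

variable {x y σ : Fin n → ℝ}

lemma diagKernel_mem (hx : ∀ k, x k = 0 ∨ x k = 1) (hy : ∀ k, y k = 0 ∨ y k = 1)
    (hσ : ∀ k, σ k * σ k = 1) : diagKernel x y σ ∈ K2 n := by
  simp only [diagKernel, K2, Set.mem_ofPred_eq, diagonal_transpose, diagonal_mul_diagonal,
    diagonal_add, diagonal_eq_zero, diagonal_eq_one, funext_iff]
  refine ⟨?_, ?_, ?_, ?_, ?_⟩ <;> intro k <;>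
    rcases hx k with hxk | hxk <;> rcases hy k with hyk | hyk <;>
    simp only [Pi.mul_apply, Pi.sub_apply, Pi.one_apply, Pi.zero_apply, hxk, hyk] <;>
    first | ring1 | linear_combination hσ k

lemma invariants_diagKernel (hx : ∀ k, x k = 0 ∨ x k = 1) (hy : ∀ k, y k = 0 ∨ y k = 1)
    (hσ : ∀ k, σ k * σ k = 1) :
    invariants (diagKernel x y σ) = (∑ k, x k, ∑ k, y k, ∏ k, σ k) := by
  simp only [invariants, diagKernel, diagonal_transpose, diagonal_mul_diagonal, diagonal_add,
    trace_diagonal, det_diagonal, Prod.mk.injEq]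
  refine ⟨Finset.sum_congr rfl fun k _ ↦ ?_, Finset.sum_congr rfl fun k _ ↦ ?_,
    Finset.prod_congr rfl fun k _ ↦ ?_⟩ <;>
    rcases hx k with hxk | hxk <;> rcases hy k with hyk | hyk <;>
    simp only [Pi.mul_apply, Pi.sub_apply, Pi.one_apply, hxk, hyk] <;>
    first | ring1 | linear_combination hσ k

end DiagKernel

def basePoint (k₀ : Fin n) (p : Fin (n + 1) × Fin (n + 1) × ℤˣ) :
    Matrix (Fin n) (Fin n) ℝ × Matrix (Fin n) (Fin n) ℝ ×
    Matrix (Fin n) (Fin n) ℝ × Matrix (Fin n) (Fin n) ℝ :=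
  diagKernel (fun k ↦ if (k : ℕ) < p.1 then 1 else 0) (fun k ↦ if (k : ℕ) < p.2.1 then 1 else 0)
    (Pi.mulSingle k₀ ((p.2.2 : ℤ) : ℝ))

lemma basePoint_mem (k₀ : Fin n) (p : Fin (n + 1) × Fin (n + 1) × ℤˣ) :
    basePoint k₀ p ∈ K2 n :=
  diagKernel_mem (fun _ ↦ (ite_eq_or_eq ..).symm) (fun _ ↦ (ite_eq_or_eq ..).symm)
    (Pi.mulSingle_mul_self_eq_one (Int.cast_units_mul_self p.2.2) k₀)

lemma invariants_basePoint (k₀ : Fin n) (p : Fin (n + 1) × Fin (n + 1) × ℤˣ) :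
    invariants (basePoint k₀ p) = invariantValue n p := by
  rw [basePoint, invariants_diagKernel (fun _ ↦ (ite_eq_or_eq ..).symm)
    (fun _ ↦ (ite_eq_or_eq ..).symm)
    (Pi.mulSingle_mul_self_eq_one (Int.cast_units_mul_self p.2.2) k₀)]
  simp [invariantValue, Finset.sum_boole, Fin.card_filter_val_lt, Finset.prod_pi_mulSingle',
    Nat.le_of_lt_succ p.1.2, Nat.le_of_lt_succ p.2.1.2]

end K2

open K2 in
theorem stmt17 (n : ℕ) (hn : 1 ≤ n) :
    ((2 * (n + 1) ^ 2 : ℕ) : Cardinal) ≤ Cardinal.mk (ConnectedComponents ↥(K2 n)) := by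
  have hconst : ∀ {A B : K2 n}, ConnectedComponents.mk A = ConnectedComponents.mk B →
      invariants A.1 = invariants B.1 :=
    (continuous_invariants.comp continuous_subtype_val).apply_eq_of_connectedComponentsMk_eq
      (Set.finite_range (invariantValue n)).isDiscrete fun A ↦ invariants_mem_range A.2
  let x : Fin (n + 1) × Fin (n + 1) × ℤˣ → K2 n := fun p ↦ ⟨basePoint ⟨0, hn⟩ p, basePoint_mem _ p⟩
  have hx : Function.Injective (ConnectedComponents.mk ∘ x) := fun p q hpq ↦
    invariantValue_injective (by simpa only [x, invariants_basePoint] using hconst hpq)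
  calc ((2 * (n + 1) ^ 2 : ℕ) : Cardinal) = Cardinal.mk (Fin (n + 1) × Fin (n + 1) × ℤˣ) := by
        simp only [Cardinal.mk_fintype, Fintype.card_prod, Fintype.card_fin,
          Fintype.card_units_int]
        push_cast; ring
    _ ≤ _ := Cardinal.mk_le_of_injective hx
end

section
/- (i) If (A_1, A_2, A_3, A_4) ∈ K₂(n), then S = A_1 + A_2 + A_3 + A_4 is orthogonal (SᵀS = I), and both Sᵀ(A_1 + A_2) and Sᵀ(A_1 + A_3) are symmetric projectors. (ii) Conversely, for any symmetric projectors P, Q and any orthogonal n×n real matrix H (HᵀH = I), the quadruple (H·P·Q, H·P·(I−Q), H·(I−P)·Q, H·(I−P)·(I−Q)) belongs to K₂(n), its four entries sum to H, and with S = H one has Sᵀ(A_1 + A_2) = P and Sᵀ(A_1 + A_3) = Q. -/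
open Matrix

/-!
Write `S = A₁ + A₂ + A₃ + A₄`. The defining relations of `K₂(n)` make every cross term of
`S Sᵀ` cancel, so `S` is orthogonal, and they give `(A₁ + A₂) Sᵀ = (A₁ + A₂)(A₁ + A₂)ᵀ`.
Hence `B = Sᵀ (A₁ + A₂)` satisfies `B = B Bᵀ`, which forces `B` to be a symmetric projector;
`A₁ + A₃` is handled by the symmetry of `K₂(n)` exchanging `A₂` and `A₃`.

Conversely, `K₂(n)` is stable under left multiplication by an orthogonal matrix, and for symmetric
projectors `P`, `Q` the relations for `(PQ, P(1 - Q), (1 - P)Q, (1 - P)(1 - Q))` reduce to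
`Q(1 - Q) = 0`, `P(1 - P) = 0` and `X² + (1 - X)² = 1` for `X = P, Q`.
-/

variable {n : ℕ}

lemma isSymProj_of_eq_mul_transpose_self {B : Matrix (Fin n) (Fin n) ℝ} (h : B = B * Bᵀ) :
    IsSymProj n B := by
  have hsymm : Bᵀ = B := by
    rw [h, transpose_mul, transpose_transpose]
  refine ⟨?_, hsymm⟩
  calc B * B = B * Bᵀ := by rw [hsymm]
    _ = B := h.symm

lemma isSymProj_transpose_mul {S A : Matrix (Fin n) (Fin n) ℝ} (hS : S * Sᵀ = 1)
    (hA : A * Sᵀ = A * Aᵀ) : IsSymProj n (Sᵀ * A) := by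
  have hS' : Sᵀ * S = 1 := mul_eq_one_comm.mp hS
  refine isSymProj_of_eq_mul_transpose_self ?_
  calc Sᵀ * A = Sᵀ * (A * Sᵀ) * S := by rw [Matrix.mul_assoc, Matrix.mul_assoc, hS', mul_one]
    _ = Sᵀ * A * (Sᵀ * A)ᵀ := by
      rw [hA, transpose_mul, transpose_transpose, Matrix.mul_assoc, Matrix.mul_assoc,
        Matrix.mul_assoc]

lemma mul_transpose_eq_zero_symm {k l m R : Type*} [Fintype m] [CommSemiring R]
    {A : Matrix k m R} {B : Matrix l m R} (h : A * Bᵀ = 0) : B * Aᵀ = 0 := by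
  simpa using congrArg transpose h

lemma swap_mem_K2 {A₁ A₂ A₃ A₄ : Matrix (Fin n) (Fin n) ℝ} (hA : (A₁, A₂, A₃, A₄) ∈ K2 n) :
    (A₁, A₃, A₂, A₄) ∈ K2 n := by
  obtain ⟨h₁₄, h₂₃, h₁₂, h₁₃, hsum⟩ := hA
  refine ⟨h₁₄, mul_transpose_eq_zero_symm h₂₃, h₁₃, h₁₂, ?_⟩
  rw [← hsum]
  abel

lemma mul_transpose_sum_eq_one_of_mem_K2 {A₁ A₂ A₃ A₄ : Matrix (Fin n) (Fin n) ℝ}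
    (hA : (A₁, A₂, A₃, A₄) ∈ K2 n) :
    (A₁ + A₂ + A₃ + A₄) * (A₁ + A₂ + A₃ + A₄)ᵀ = 1 := by
  obtain ⟨h₁₄, h₂₃, h₁₂, h₁₃, hsum⟩ := hA
  have h₁₂' := congrArg transpose h₁₂
  have h₁₃' := congrArg transpose h₁₃
  simp only [transpose_add, transpose_mul, transpose_transpose, transpose_zero] at h₁₂' h₁₃'
  calc (A₁ + A₂ + A₃ + A₄) * (A₁ + A₂ + A₃ + A₄)ᵀ
      = (A₁ * A₁ᵀ + A₂ * A₂ᵀ + A₃ * A₃ᵀ + A₄ * A₄ᵀ)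
          + (A₁ * A₂ᵀ + A₃ * A₄ᵀ) + (A₂ * A₁ᵀ + A₄ * A₃ᵀ)
          + (A₁ * A₃ᵀ + A₂ * A₄ᵀ) + (A₃ * A₁ᵀ + A₄ * A₂ᵀ)
          + A₁ * A₄ᵀ + A₄ * A₁ᵀ + A₂ * A₃ᵀ + A₃ * A₂ᵀ := by
        simp only [transpose_add]
        noncomm_ring
    _ = 1 := by
      rw [hsum, h₁₂, h₁₂', h₁₃, h₁₃', h₁₄, mul_transpose_eq_zero_symm h₁₄, h₂₃,
        mul_transpose_eq_zero_symm h₂₃]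
      simp

lemma add_mul_transpose_sum_of_mem_K2 {A₁ A₂ A₃ A₄ : Matrix (Fin n) (Fin n) ℝ}
    (hA : (A₁, A₂, A₃, A₄) ∈ K2 n) :
    (A₁ + A₂) * (A₁ + A₂ + A₃ + A₄)ᵀ = (A₁ + A₂) * (A₁ + A₂)ᵀ := by
  obtain ⟨h₁₄, h₂₃, -, h₁₃, -⟩ := hA
  calc (A₁ + A₂) * (A₁ + A₂ + A₃ + A₄)ᵀ
      = (A₁ + A₂) * (A₁ + A₂)ᵀ + (A₁ * A₃ᵀ + A₂ * A₄ᵀ) + A₁ * A₄ᵀ + A₂ * A₃ᵀ := by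
        simp only [transpose_add]
        noncomm_ring
    _ = (A₁ + A₂) * (A₁ + A₂)ᵀ := by rw [h₁₃, h₁₄, h₂₃]; simp

lemma mul_left_mem_K2 {B₁ B₂ B₃ B₄ H : Matrix (Fin n) (Fin n) ℝ}
    (hB : (B₁, B₂, B₃, B₄) ∈ K2 n) (hH : H * Hᵀ = 1) :
    (H * B₁, H * B₂, H * B₃, H * B₄) ∈ K2 n := by
  have conj : ∀ X Y : Matrix (Fin n) (Fin n) ℝ, H * X * (H * Y)ᵀ = H * (X * Yᵀ) * Hᵀ := by
    intro X Y
    simp only [transpose_mul, Matrix.mul_assoc]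
  obtain ⟨h₁₄, h₂₃, h₁₂, h₁₃, hsum⟩ := hB
  refine ⟨?_, ?_, ?_, ?_, ?_⟩ <;>
    simp only [conj, ← add_mul, ← mul_add, h₁₄, h₂₃, h₁₂, h₁₃, hsum, mul_zero, zero_mul,
      mul_one, hH]

lemma IsIdempotentElem.mul_self_add_one_sub_mul_self {R : Type*} [NonAssocRing R] {a : R}
    (h : IsIdempotentElem a) : a * a + (1 - a) * (1 - a) = 1 := by
  rw [h.eq, h.one_sub.eq, add_sub_cancel]

lemma mem_K2_of_isSymProj {P Q : Matrix (Fin n) (Fin n) ℝ} (hP : IsSymProj n P)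
    (hQ : IsSymProj n Q) : (P * Q, P * (1 - Q), (1 - P) * Q, (1 - P) * (1 - Q)) ∈ K2 n := by
  obtain ⟨hP : IsIdempotentElem P, hPt⟩ := hP
  obtain ⟨hQ : IsIdempotentElem Q, hQt⟩ := hQ
  refine ⟨?_, ?_, ?_, ?_, ?_⟩ <;>
    simp only [transpose_mul, transpose_sub, transpose_one, hPt, hQt]
  · calc _ = P * (Q * (1 - Q)) * (1 - P) := by noncomm_ring
      _ = 0 := by simp [hQ.mul_one_sub_self]
  · calc _ = P * ((1 - Q) * Q) * (1 - P) := by noncomm_ring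
      _ = 0 := by simp [hQ.one_sub_mul_self]
  · calc _ = P * (Q * (1 - Q)) * P + (1 - P) * (Q * (1 - Q)) * (1 - P) := by noncomm_ring
      _ = 0 := by simp [hQ.mul_one_sub_self]
  · calc _ = P * (Q * Q + (1 - Q) * (1 - Q)) * (1 - P) := by noncomm_ring
      _ = 0 := by simp [hQ.mul_self_add_one_sub_mul_self, hP.mul_one_sub_self]
  · calc _ = P * (Q * Q + (1 - Q) * (1 - Q)) * P
          + (1 - P) * (Q * Q + (1 - Q) * (1 - Q)) * (1 - P) := by noncomm_ring
      _ = 1 := by simp [hQ.mul_self_add_one_sub_mul_self, hP.mul_self_add_one_sub_mul_self]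

theorem stmt18_general (n : ℕ) :
    (∀ A₁ A₂ A₃ A₄ : Matrix (Fin n) (Fin n) ℝ, (A₁, A₂, A₃, A₄) ∈ K2 n →
      (A₁ + A₂ + A₃ + A₄)ᵀ * (A₁ + A₂ + A₃ + A₄) = 1 ∧
      IsSymProj n ((A₁ + A₂ + A₃ + A₄)ᵀ * (A₁ + A₂)) ∧
      IsSymProj n ((A₁ + A₂ + A₃ + A₄)ᵀ * (A₁ + A₃))) ∧
    (∀ P Q H : Matrix (Fin n) (Fin n) ℝ, IsSymProj n P → IsSymProj n Q →
      Hᵀ * H = 1 →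
      (H * P * Q, H * P * (1 - Q), H * (1 - P) * Q, H * (1 - P) * (1 - Q)) ∈ K2 n ∧
      H * P * Q + H * P * (1 - Q) + H * (1 - P) * Q + H * (1 - P) * (1 - Q) = H ∧
      Hᵀ * (H * P * Q + H * P * (1 - Q)) = P ∧
      Hᵀ * (H * P * Q + H * (1 - P) * Q) = Q) := by
  refine ⟨fun A₁ A₂ A₃ A₄ hA => ?_, fun P Q H hP hQ hH => ?_⟩
  · have hS := mul_transpose_sum_eq_one_of_mem_K2 hA
    have h₁₃ := add_mul_transpose_sum_of_mem_K2 (swap_mem_K2 hA)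
    rw [show A₁ + A₃ + A₂ + A₄ = A₁ + A₂ + A₃ + A₄ by abel] at h₁₃
    exact ⟨mul_eq_one_comm.mp hS, isSymProj_transpose_mul hS (add_mul_transpose_sum_of_mem_K2 hA),
      isSymProj_transpose_mul hS h₁₃⟩
  · refine ⟨?_, by noncomm_ring, ?_, ?_⟩
    · simpa only [Matrix.mul_assoc] using
        mul_left_mem_K2 (mem_K2_of_isSymProj hP hQ) (mul_eq_one_comm.mp hH)
    · rw [show Hᵀ * (H * P * Q + H * P * (1 - Q)) = Hᵀ * H * P by noncomm_ring, hH, one_mul]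
    · rw [show Hᵀ * (H * P * Q + H * (1 - P) * Q) = Hᵀ * H * Q by noncomm_ring, hH, one_mul]

theorem stmt18 (n : ℕ) (hn : 1 ≤ n) :
    (∀ A₁ A₂ A₃ A₄ : Matrix (Fin n) (Fin n) ℝ, (A₁, A₂, A₃, A₄) ∈ K2 n →
      (A₁ + A₂ + A₃ + A₄)ᵀ * (A₁ + A₂ + A₃ + A₄) = 1 ∧
      IsSymProj n ((A₁ + A₂ + A₃ + A₄)ᵀ * (A₁ + A₂)) ∧
      IsSymProj n ((A₁ + A₂ + A₃ + A₄)ᵀ * (A₁ + A₃))) ∧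
    (∀ P Q H : Matrix (Fin n) (Fin n) ℝ, IsSymProj n P → IsSymProj n Q →
      Hᵀ * H = 1 →
      (H * P * Q, H * P * (1 - Q), H * (1 - P) * Q, H * (1 - P) * (1 - Q)) ∈ K2 n ∧
      H * P * Q + H * P * (1 - Q) + H * (1 - P) * Q + H * (1 - P) * (1 - Q) = H ∧
      Hᵀ * (H * P * Q + H * P * (1 - Q)) = P ∧
      Hᵀ * (H * P * Q + H * (1 - P) * Q) = Q) :=
  stmt18_general n
end

section
/- Let 1 ≤ p < ∞ be a real number, let d, C ≥ 1, equip ℝ^d and ℝ^C with the ℓ_p norm, and let f : ℝ^d → ℝ^C be Lipschitz with constant l ≥ 0 with respect to these norms. Let x ∈ ℝ^d, let t be an index in {1,…,C}, and let ε ≥ 0. If f(x)_t − f(x)_i > 2^{(p−1)/p} · l · ε for every index i ≠ t, then for every Δx ∈ ℝ^d with ‖Δx‖_p ≤ ε and every index i ≠ t, it holds that f(x + Δx)_t > f(x + Δx)_i. -/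
/-!
Write `u = x + Δx`. By the Lipschitz bound, the vector `f u - f x` has `ℓ_p` norm at most `l ε`,
and Hölder's inequality on the two coordinates `t` and `i` turns this into
`|f u t - f x t| + |f u i - f x i| ≤ 2 ^ ((p - 1) / p) * l * ε`.
The two outputs can therefore close the margin by at most `2 ^ ((p - 1) / p) * l * ε`,
which is strictly less than it.
-/

open Finset

theorem Real.sum_abs_le_card_rpow_mul_rpow_sum {ι : Type*} [Fintype ι] (s : Finset ι)
    (v : ι → ℝ) {p : ℝ} (hp : 1 ≤ p) :
    ∑ i ∈ s, |v i| ≤ (#s : ℝ) ^ ((p - 1) / p) * (∑ i, |v i| ^ p) ^ (1 / p) := by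
  have hp0 : 0 < p := one_pos.trans_le hp
  have hsub : ∑ i ∈ s, |v i| ^ p ≤ ∑ i, |v i| ^ p :=
    sum_le_sum_of_subset_of_nonneg (subset_univ s) fun i _ _ ↦ by positivity
  calc ∑ i ∈ s, |v i| = ((∑ i ∈ s, |v i|) ^ p) ^ (1 / p) := by
        rw [← Real.rpow_mul (by positivity), mul_one_div_cancel hp0.ne', Real.rpow_one]
    _ ≤ ((#s : ℝ) ^ (p - 1) * ∑ i ∈ s, |v i| ^ p) ^ (1 / p) := by
        gcongr
        exact Real.rpow_sum_le_const_mul_sum_rpow s v hp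
    _ = (#s : ℝ) ^ ((p - 1) / p) * (∑ i ∈ s, |v i| ^ p) ^ (1 / p) := by
        rw [Real.mul_rpow (by positivity) (by positivity), ← Real.rpow_mul (by positivity),
          mul_one_div]
    _ ≤ (#s : ℝ) ^ ((p - 1) / p) * (∑ i, |v i| ^ p) ^ (1 / p) := by gcongr

theorem stmt19_general (p : ℝ) (hp : 1 ≤ p) (d C : ℕ)
    (f : (Fin d → ℝ) → (Fin C → ℝ)) (l : ℝ) (hl : 0 ≤ l)
    (hf : ∀ u v : Fin d → ℝ,
      (∑ i, |f u i - f v i| ^ p) ^ (1 / p) ≤ l * (∑ i, |u i - v i| ^ p) ^ (1 / p))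
    (x : Fin d → ℝ) (t : Fin C) (ε : ℝ)
    (hmargin : ∀ i, i ≠ t → (2 : ℝ) ^ ((p - 1) / p) * l * ε < f x t - f x i) :
    ∀ Δx : Fin d → ℝ, (∑ i, |Δx i| ^ p) ^ (1 / p) ≤ ε →
      ∀ i, i ≠ t → f (x + Δx) i < f (x + Δx) t := by
  intro Δx hΔx i hit
  set u := x + Δx
  have hlip : (∑ j, |f u j - f x j| ^ p) ^ (1 / p) ≤ l * ε := by
    have hux : ∀ j, u j - x j = Δx j := fun j ↦ add_sub_cancel_left (x j) (Δx j)
    have hfux := hf u x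
    simp only [hux] at hfux
    exact hfux.trans (mul_le_mul_of_nonneg_left hΔx hl)
  have hdev : |f u t - f x t| + |f u i - f x i| ≤ (2 : ℝ) ^ ((p - 1) / p) * l * ε := by
    have hpair := Real.sum_abs_le_card_rpow_mul_rpow_sum {t, i} (f u - f x) hp
    rw [sum_pair hit.symm, card_pair hit.symm, Nat.cast_two] at hpair
    rw [mul_assoc]
    exact hpair.trans (mul_le_mul_of_nonneg_left hlip (by positivity))
  linarith [hmargin i hit, neg_abs_le (f u t - f x t), le_abs_self (f u i - f x i)]

theorem stmt19 (p : ℝ) (hp : 1 ≤ p) (d C : ℕ) (hd : 1 ≤ d) (hC : 1 ≤ C)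
    (f : (Fin d → ℝ) → (Fin C → ℝ)) (l : ℝ) (hl : 0 ≤ l)
    (hf : ∀ u v : Fin d → ℝ,
      (∑ i, |f u i - f v i| ^ p) ^ (1 / p) ≤ l * (∑ i, |u i - v i| ^ p) ^ (1 / p))
    (x : Fin d → ℝ) (t : Fin C) (ε : ℝ) (hε : 0 ≤ ε)
    (hmargin : ∀ i, i ≠ t → (2 : ℝ) ^ ((p - 1) / p) * l * ε < f x t - f x i) :
    ∀ Δx : Fin d → ℝ, (∑ i, |Δx i| ^ p) ^ (1 / p) ≤ ε →
      ∀ i, i ≠ t → f (x + Δx) i < f (x + Δx) t :=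
  stmt19_general p hp d C f l hl hf x t ε hmargin
end
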